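/- arXiv:2210.15746 — 10 statements merged into one kernel-verified Lean document; each statement's English description precedes it below -/
import Mathlib

section
/- If G has finite NCC and H ≤ G has finite index, then NCC(H) ≤ [G:H] · NCC(G); in particular H has finite NCC. -/
/-- `CC G Φ`: the smallest number of cyclic subgroups of `G` whose `Φ`-orbits cover `G`. -/
noncomputable def CC (G Φ : Type*) [Group G] [Group Φ] [MulDistribMulAction Φ G] : ℕ∞ :=
  sInf {n : ℕ∞ | ∃ s : Finset G, (s.card : ℕ∞) = n ∧
    ∀ x : G, ∃ g ∈ s, ∃ φ : Φ, x ∈ Subgroup.zpowers (φ • g)}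

/-- `NCC G`: the smallest number of cyclic subgroups of `G` whose conjugacy classes cover `G`. -/
noncomputable def NCC (G : Type*) [Group G] : ℕ∞ := CC G (ConjAct G)

/-!
Fix coset representatives `c_q` of `H`. If `x ∈ H` lies in a conjugate `u ⟨g⟩ u⁻¹`, write
`u = h c_q⁻¹` with `h ∈ H`; then `h⁻¹ x h` lies in `⟨c_q⁻¹ g c_q⟩ ∩ H`, which is again cyclic. Hence
the `[G : H] · |s|` cyclic groups `⟨c_q⁻¹ g c_q⟩ ∩ H`, for `g` in a cover `s` of `G`, cover `H` up
to conjugacy in `H`.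
-/

open Subgroup

section Cover

variable {G : Type*} [Group G]

def IsCyclicCover (Φ : Type*) [Group Φ] [MulDistribMulAction Φ G] (s : Finset G) : Prop :=
  ∀ x : G, ∃ g ∈ s, ∃ φ : Φ, x ∈ zpowers (φ • g)

theorem CC_le_card {Φ : Type*} [Group Φ] [MulDistribMulAction Φ G] {s : Finset G}
    (hs : IsCyclicCover Φ s) : CC G Φ ≤ s.card :=
  sInf_le ⟨s, rfl, hs⟩

theorem exists_isCyclicCover_card_eq_CC {Φ : Type*} [Group Φ] [MulDistribMulAction Φ G]
    (h : CC G Φ ≠ ⊤) : ∃ s : Finset G, IsCyclicCover Φ s ∧ (s.card : ℕ∞) = CC G Φ := by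
  have hne : {n : ℕ∞ | ∃ s : Finset G, (s.card : ℕ∞) = n ∧ IsCyclicCover Φ s}.Nonempty :=
    Set.nonempty_iff_ne_empty.mpr fun hempty => h (by rw [CC]; exact hempty ▸ sInf_empty)
  obtain ⟨s, hcard, hs⟩ := csInf_mem hne
  exact ⟨s, hs, hcard⟩

end Cover

namespace Subgroup

variable {G : Type*} [Group G]

theorem exists_zpowers_eq_zpowers_inf (y : G) (H : Subgroup G) :
    ∃ z : G, zpowers y ⊓ H = zpowers z :=
  let ⟨n, hn⟩ := (le_zpowers_iff y _).mp inf_le_left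
  ⟨y ^ n, hn⟩

theorem mem_zpowers_conj_iff {x y h : G} :
    x ∈ zpowers (h * y * h⁻¹) ↔ h⁻¹ * x * h ∈ zpowers y := by
  simp only [mem_zpowers_iff, conj_zpow]
  constructor
  · rintro ⟨k, rfl⟩
    exact ⟨k, by group⟩
  · rintro ⟨k, hk⟩
    exact ⟨k, by rw [hk]; group⟩

theorem mem_zpowers_subtype_iff {H : Subgroup G} {a b : H} :
    a ∈ zpowers b ↔ (a : G) ∈ zpowers (b : G) := by
  rw [← mem_map_iff_mem H.subtype_injective, MonoidHom.map_zpowers]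
  rfl

theorem exists_conj_mem_zpowers_out_conj (H : Subgroup G) {x g u : G}
    (hx : x ∈ zpowers (u * g * u⁻¹)) :
    ∃ q : G ⧸ H, ∃ h ∈ H, h⁻¹ * x * h ∈ zpowers (q.out⁻¹ * g * q.out) := by
  obtain ⟨h, hh⟩ := QuotientGroup.mk_out_eq_mul H u⁻¹
  refine ⟨(u⁻¹ : G), h, h.2, ?_⟩
  rw [hh, ← mem_zpowers_conj_iff]
  simpa [mul_assoc] using hx

end Subgroup

open Finset in
theorem IsCyclicCover.exists_cover_subgroup_card_le {G : Type*} [Group G] (H : Subgroup G)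
    [H.FiniteIndex] {s : Finset G} (hs : IsCyclicCover (ConjAct G) s) :
    ∃ t : Finset H, IsCyclicCover (ConjAct H) t ∧ t.card ≤ H.index * s.card := by
  classical
  cases nonempty_fintype (G ⧸ H)
  choose z hz using fun (q : G ⧸ H) (g : G) ↦ exists_zpowers_eq_zpowers_inf (q.out⁻¹ * g * q.out) H
  have hzH (q : G ⧸ H) (g : G) : z q g ∈ H := zpowers_le.mp (hz q g ▸ inf_le_right)
  refine ⟨(univ ×ˢ s).image fun p ↦ ⟨z p.1 p.2, hzH p.1 p.2⟩, fun x ↦ ?_, ?_⟩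
  · obtain ⟨g, hg, φ, hx⟩ := hs x
    obtain ⟨q, h, hh, hxq⟩ := exists_conj_mem_zpowers_out_conj H (u := ConjAct.ofConjAct φ)
      (by simpa only [ConjAct.smul_def] using hx)
    have hxz : h⁻¹ * x * h ∈ zpowers (z q g) :=
      hz q g ▸ ⟨hxq, H.mul_mem (H.mul_mem (H.inv_mem hh) x.2) hh⟩
    refine ⟨_, mem_image.mpr ⟨(q, g), by simpa using hg, rfl⟩, ConjAct.toConjAct ⟨h, hh⟩, ?_⟩
    simpa [mem_zpowers_subtype_iff, ConjAct.smul_def, mem_zpowers_conj_iff] using hxz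
  · calc _ ≤ (univ ×ˢ s).card := card_image_le
      _ = H.index * s.card := by
        rw [card_product, card_univ, index_eq_card, Nat.card_eq_fintype_card]

theorem NCC_le_index_mul_card {G : Type*} [Group G] (H : Subgroup G) [H.FiniteIndex]
    {s : Finset G} (hs : IsCyclicCover (ConjAct G) s) : NCC H ≤ (H.index * s.card : ℕ) := by
  obtain ⟨t, ht, hcard⟩ := hs.exists_cover_subgroup_card_le H
  exact (CC_le_card ht).trans (by exact_mod_cast hcard)

/-- If `G` has finite NCC and `H ≤ G` has finite index, then `NCC(H) ≤ [G:H] · NCC(G)`;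
in particular `H` has finite NCC. -/
theorem stmt_4 {G : Type*} [Group G] (H : Subgroup G) [H.FiniteIndex] (hG : NCC G ≠ ⊤) :
    NCC ↥H ≤ (H.index : ℕ∞) * NCC G ∧ NCC ↥H ≠ ⊤ := by
  obtain ⟨s, hs, hcard⟩ := exists_isCyclicCover_card_eq_CC hG
  have hle := NCC_le_index_mul_card H hs
  exact ⟨by simpa [NCC, hcard] using hle, ne_top_of_le_ne_top (ENat.natCast_ne_top _) hle⟩
end

section
/- For groups G and H with groups Φ, Ψ acting by automorphisms and with CC(G,Φ), CC(H,Ψ) finite, one has CC(G×H, Φ×Ψ) ≥ CC(G,Φ) · CC(H,Ψ). In particular NCC(G×H) ≥ NCC(G)·NCC(H) when G and H have finite NCC. -/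
/-- `CCprod`: the smallest number of cyclic subgroups of `G × H` whose orbits under the
product action of `Φ × Ψ` (acting componentwise) cover `G × H`. -/
noncomputable def CCprod (G H Φ Ψ : Type*) [Group G] [Group H] [Group Φ] [Group Ψ]
    [MulDistribMulAction Φ G] [MulDistribMulAction Ψ H] : ℕ∞ :=
  sInf {n : ℕ∞ | ∃ s : Finset (G × H), (s.card : ℕ∞) = n ∧
    ∀ x : G × H, ∃ g ∈ s, ∃ (φ : Φ) (ψ : Ψ), x ∈ Subgroup.zpowers (φ • g.1, ψ • g.2)}

/-!
Attach to each `g ∈ G` the union `S(g) = orbitZpowers Φ g` of the `Φ`-images of `⟨g⟩`; if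
`a ∈ ⟨φ • b⟩` then `S(a) ⊆ S(b)`. Given a cover `s` of `G × H`, group its members `(g, h)` by
`S(g)` and keep the classes whose `S(g)` is maximal. Covering the elements `(x, 1)` shows that
the maximal classes already cover `G`, so there are at least `CC(G, Φ)` of them. Covering the
elements `(a, y)` with `S(a)` maximal forces the cover to use members of the class of `S(a)`, so
the second coordinates of each maximal class cover `H`, and each class has at least `CC(H, Ψ)`
members.
-/

open Finset

section OrbitZpowers

variable (Φ : Type*) {G : Type*} [Group G] [Group Φ] [MulDistribMulAction Φ G]

def orbitZpowers (a : G) : Set G :=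
  ⋃ φ : Φ, (Subgroup.zpowers (φ • a) : Set G)

variable {Φ}

lemma mem_orbitZpowers {a x : G} :
    x ∈ orbitZpowers Φ a ↔ ∃ φ : Φ, x ∈ Subgroup.zpowers (φ • a) := by
  simp [orbitZpowers]

lemma orbitZpowers_subset_of_mem_zpowers {a b : G} (φ : Φ)
    (h : a ∈ Subgroup.zpowers (φ • b)) : orbitZpowers Φ a ⊆ orbitZpowers Φ b := by
  obtain ⟨u, rfl⟩ := Subgroup.mem_zpowers_iff.1 h
  intro x hx
  obtain ⟨χ, t, rfl⟩ := mem_orbitZpowers.1 hx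
  refine mem_orbitZpowers.2 ⟨χ * φ, Subgroup.mem_zpowers_iff.2 ⟨u * t, ?_⟩⟩
  rw [smul_zpow', mul_smul, zpow_mul]

lemma CC_le_card_s5 (s : Finset G) (h : ∀ x : G, ∃ g ∈ s, x ∈ orbitZpowers Φ g) :
    CC G Φ ≤ #s :=
  sInf_le ⟨s, rfl, fun x => by simpa only [mem_orbitZpowers] using h x⟩

end OrbitZpowers

lemma Prod.mem_zpowers_fst {G H : Type*} [Group G] [Group H] {x a : G × H}
    (h : x ∈ Subgroup.zpowers a) : x.1 ∈ Subgroup.zpowers a.1 := by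
  obtain ⟨k, rfl⟩ := Subgroup.mem_zpowers_iff.1 h
  exact ⟨k, rfl⟩

lemma Prod.mem_zpowers_snd {G H : Type*} [Group G] [Group H] {x a : G × H}
    (h : x ∈ Subgroup.zpowers a) : x.2 ∈ Subgroup.zpowers a.2 := by
  obtain ⟨k, rfl⟩ := Subgroup.mem_zpowers_iff.1 h
  exact ⟨k, rfl⟩

section ProductCover

variable {G H Φ Ψ : Type*} [Group G] [Group H] [Group Φ] [Group Ψ]
  [MulDistribMulAction Φ G] [MulDistribMulAction Ψ H]

open scoped Classical

lemma CC_le_card_maximal_orbitZpowers {s : Finset (G × H)}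
    (hs : ∀ x : G × H, ∃ g ∈ s, ∃ (φ : Φ) (ψ : Ψ), x ∈ Subgroup.zpowers (φ • g.1, ψ • g.2)) :
    CC G Φ ≤
      #{V ∈ s.image (orbitZpowers Φ ·.1) | Maximal (· ∈ s.image (orbitZpowers Φ ·.1)) V} := by
  set t := s.image (orbitZpowers Φ ·.1)
  obtain ⟨R, -, hinj, hR⟩ := exists_subset_injOn_image_eq_of_surjOn Set.univ
    {V ∈ t | Maximal (· ∈ t) V} (fun V hV => by
      obtain ⟨g, -, hg⟩ := mem_image.1 (mem_filter.1 hV).1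
      exact ⟨g.1, trivial, hg⟩)
  rw [← hR, card_image_of_injOn hinj]
  refine CC_le_card_s5 R fun x => ?_
  obtain ⟨g, hg, φ, _, hx⟩ := hs (x, 1)
  obtain ⟨W, hgW, hW⟩ := t.exists_le_maximal (mem_image_of_mem _ hg)
  have hWR : W ∈ R.image (orbitZpowers Φ) := hR ▸ mem_filter.2 ⟨hW.prop, hW⟩
  obtain ⟨a, ha, rfl⟩ := mem_image.1 hWR
  exact ⟨a, ha, hgW (mem_orbitZpowers.2 ⟨φ, Prod.mem_zpowers_fst hx⟩)⟩

lemma CC_le_card_filter_orbitZpowers_eq {s : Finset (G × H)}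
    (hs : ∀ x : G × H, ∃ g ∈ s, ∃ (φ : Φ) (ψ : Ψ), x ∈ Subgroup.zpowers (φ • g.1, ψ • g.2))
    {V : Set G} (hV : Maximal (· ∈ s.image (orbitZpowers Φ ·.1)) V) :
    CC H Ψ ≤ #{g ∈ s | orbitZpowers Φ g.1 = V} := by
  obtain ⟨g₀, -, rfl⟩ := mem_image.1 hV.prop
  set F := {g ∈ s | orbitZpowers Φ g.1 = orbitZpowers Φ g₀.1}
  refine (CC_le_card_s5 (F.image Prod.snd) fun y => ?_).trans (mod_cast card_image_le)
  obtain ⟨g, hg, φ, ψ, hmem⟩ := hs (g₀.1, y)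
  have hsub := orbitZpowers_subset_of_mem_zpowers φ (Prod.mem_zpowers_fst hmem)
  have hclass := (hV.eq_of_le (mem_image_of_mem _ hg) hsub).symm
  exact ⟨g.2, mem_image_of_mem _ (mem_filter.2 ⟨hg, hclass⟩),
    mem_orbitZpowers.2 ⟨ψ, Prod.mem_zpowers_snd hmem⟩⟩

lemma CC_mul_CC_le_card {s : Finset (G × H)}
    (hs : ∀ x : G × H, ∃ g ∈ s, ∃ (φ : Φ) (ψ : Ψ), x ∈ Subgroup.zpowers (φ • g.1, ψ • g.2)) :
    CC G Φ * CC H Ψ ≤ #s := by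
  set t := s.image (orbitZpowers Φ ·.1)
  set M := {V ∈ t | Maximal (· ∈ t) V}
  calc CC G Φ * CC H Ψ ≤ #M * CC H Ψ := by
        gcongr; exact CC_le_card_maximal_orbitZpowers hs
    _ = ∑ _V ∈ M, CC H Ψ := by rw [sum_const, nsmul_eq_mul]
    _ ≤ ∑ V ∈ M, (#{g ∈ s | orbitZpowers Φ g.1 = V} : ℕ∞) :=
        sum_le_sum fun V hV => CC_le_card_filter_orbitZpowers_eq hs (mem_filter.1 hV).2
    _ ≤ ∑ V ∈ t, (#{g ∈ s | orbitZpowers Φ g.1 = V} : ℕ∞) :=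
        sum_le_sum_of_subset (filter_subset _ _)
    _ = #s := by rw [card_eq_sum_card_image (orbitZpowers Φ ·.1) s]; push_cast; rfl

end ProductCover

lemma CC_mul_CC_le_CCprod {G H Φ Ψ : Type*} [Group G] [Group H] [Group Φ] [Group Ψ]
    [MulDistribMulAction Φ G] [MulDistribMulAction Ψ H] :
    CC G Φ * CC H Ψ ≤ CCprod G H Φ Ψ :=
  le_sInf fun _ ⟨_, hcard, hs⟩ => hcard ▸ CC_mul_CC_le_card hs

lemma CCprod_conjAct_le_NCC_prod {G H : Type*} [Group G] [Group H] :
    CCprod G H (ConjAct G) (ConjAct H) ≤ NCC (G × H) := by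
  refine le_sInf fun _ ⟨s, hcard, hs⟩ => sInf_le ⟨s, hcard, fun x => ?_⟩
  obtain ⟨g, hg, c, hx⟩ := hs x
  refine ⟨g, hg, ConjAct.toConjAct (ConjAct.ofConjAct c).1,
    ConjAct.toConjAct (ConjAct.ofConjAct c).2, ?_⟩
  convert hx using 2
  simp [ConjAct.smul_def, Prod.ext_iff]

theorem stmt_5_general {G H Φ Ψ : Type*} [Group G] [Group H] [Group Φ] [Group Ψ]
    [MulDistribMulAction Φ G] [MulDistribMulAction Ψ H] :
    CC G Φ * CC H Ψ ≤ CCprod G H Φ Ψ ∧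
      (NCC G ≠ ⊤ → NCC H ≠ ⊤ → NCC G * NCC H ≤ NCC (G × H)) :=
  ⟨CC_mul_CC_le_CCprod, fun _ _ => CC_mul_CC_le_CCprod.trans CCprod_conjAct_le_NCC_prod⟩

/-- For groups `G`, `H` with actions of `Φ`, `Ψ` having finite covering numbers,
`CC(G×H, Φ×Ψ) ≥ CC(G,Φ) · CC(H,Ψ)`; in particular `NCC(G×H) ≥ NCC(G) · NCC(H)`
when `G` and `H` have finite NCC. -/
theorem stmt_5 {G H Φ Ψ : Type*} [Group G] [Group H] [Group Φ] [Group Ψ]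
    [MulDistribMulAction Φ G] [MulDistribMulAction Ψ H]
    (hG : CC G Φ ≠ ⊤) (hH : CC H Ψ ≠ ⊤) :
    CC G Φ * CC H Ψ ≤ CCprod G H Φ Ψ ∧
      (NCC G ≠ ⊤ → NCC H ≠ ⊤ → NCC G * NCC H ≤ NCC (G × H)) :=
  stmt_5_general
end

section
/- Let G be a residually finite discrete group with finite NCC that is not cyclic. Then there is no surjective group homomorphism from G onto the integers ℤ. -/
/-!
Let `f : G → ℤ` be onto, `u` a preimage of `1`, and `h : G → F` a finite quotient. Choose
`M ≠ 0` divisible by every nonzero `|F|·f(g)`, `g` in a finite family `s` whose cyclic subgroups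
cover `G` up to conjugacy. For `g₀ ∈ ker f`, the element `u^M g₀` is conjugate to some `g^k`
with `g ∈ s`; applying `f` gives `M = k f(g)`, so `|F|` divides `k` and `h` kills `u^M g₀`,
hence also `g₀`. Thus `ker f` lies in every finite-index normal subgroup, so by residual
finiteness `f` is injective and `G ≅ ℤ` is cyclic.
-/

open Subgroup

lemma exists_finset_covering_of_NCC_ne_top {G : Type*} [Group G] (hncc : NCC G ≠ ⊤) :
    ∃ s : Finset G, ∀ x : G, ∃ g ∈ s, ∃ φ : ConjAct G, x ∈ zpowers (φ • g) := by
  by_contra! hc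
  refine hncc ((congrArg sInf ?_).trans sInf_empty)
  rw [Set.eq_empty_iff_forall_notMem]
  rintro n ⟨s, -, hs⟩
  obtain ⟨x, hx⟩ := hc s
  obtain ⟨g, hg, φ, hmem⟩ := hs x
  exact hx g hg φ hmem

lemma Finset.exists_ne_zero_forall_dvd {ι : Type*} (s : Finset ι) (a : ι → ℤ) :
    ∃ P : ℤ, P ≠ 0 ∧ ∀ i ∈ s, a i ≠ 0 → a i ∣ P := by
  classical
  refine ⟨∏ i ∈ s.filter (a · ≠ 0), a i, ?_, fun i hi hai ↦ ?_⟩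
  · exact Finset.prod_ne_zero_iff.mpr fun i hi ↦ (Finset.mem_filter.mp hi).2
  · exact Finset.dvd_prod_of_mem a (Finset.mem_filter.mpr ⟨hi, hai⟩)

lemma dvd_of_mul_eq_mul_of_dvd {c P k a : ℤ} (h : c * P = k * a) (haP : a ∣ P) (ha : a ≠ 0) :
    c ∣ k := by
  obtain ⟨b, rfl⟩ := haP
  exact ⟨b, mul_right_cancel₀ ha (by rw [← h]; ring)⟩

lemma zpow_eq_one_of_natCard_dvd {F : Type*} [Group F] (y : F) {k : ℤ}
    (hk : (Nat.card F : ℤ) ∣ k) : y ^ k = 1 := by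
  rw [← zpow_mod_natCard, Int.emod_eq_zero_of_dvd hk, zpow_zero]

lemma MonoidHom.map_conjAct_smul {G A : Type*} [Group G] [CommGroup A] (f : G →* A)
    (φ : ConjAct G) (g : G) : f (φ • g) = f g := by
  rw [ConjAct.smul_def, map_mul, map_mul, map_inv, mul_inv_cancel_comm]

lemma MonoidHom.ker_le_ker_of_finite_of_covering {G F : Type*} [Group G] [Group F] [Finite F]
    {s : Finset G} (hs : ∀ x : G, ∃ g ∈ s, ∃ φ : ConjAct G, x ∈ zpowers (φ • g))
    {f : G →* Multiplicative ℤ} (hf : Function.Surjective f) (h : G →* F) : f.ker ≤ h.ker := by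
  intro g₀ (hg₀ : f g₀ = 1)
  obtain ⟨u, hu⟩ := hf (Multiplicative.ofAdd 1)
  obtain ⟨P, hP0, hP⟩ := s.exists_ne_zero_forall_dvd fun g ↦ (f g).toAdd
  set c : ℤ := (Nat.card F : ℤ)
  have hc0 : c ≠ 0 := Int.natCast_ne_zero.mpr Nat.card_pos.ne'
  obtain ⟨g, hg, φ, k, hk⟩ := hs (u ^ (c * P) * g₀)
  have hMk : c * P = k * (f g).toAdd := by
    have := congrArg (fun y ↦ (f y).toAdd) hk
    simpa [map_conjAct_smul, hu, hg₀] using this.symm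
  have hfg : (f g).toAdd ≠ 0 := by
    rintro hfg
    rw [hfg, mul_zero] at hMk
    exact mul_ne_zero hc0 hP0 hMk
  have hck : c ∣ k := dvd_of_mul_eq_mul_of_dvd hMk (hP g hg hfg) hfg
  have hx : h (u ^ (c * P) * g₀) = 1 := by
    rw [← hk, map_zpow]
    exact zpow_eq_one_of_natCard_dvd _ hck
  rwa [map_mul, map_zpow, zpow_eq_one_of_natCard_dvd _ (dvd_mul_right c P), one_mul] at hx

/-- Let `G` be a residually finite discrete group with finite NCC which is not cyclic.
Then there is no surjective homomorphism from `G` onto `ℤ`. -/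
theorem stmt_6 {G : Type*} [Group G]
    (hrf : ∀ g : G, g ≠ 1 → ∃ (F : Type) (_ : Group F) (_ : Finite F) (f : G →* F), f g ≠ 1)
    (hncc : NCC G ≠ ⊤) (hcyc : ¬ IsCyclic G) :
    ¬ ∃ f : G →* Multiplicative ℤ, Function.Surjective f := by
  rintro ⟨f, hf⟩
  obtain ⟨s, hs⟩ := exists_finset_covering_of_NCC_ne_top hncc
  have hinj : Function.Injective f := by
    refine (injective_iff_map_eq_one f).mpr fun g₀ hg₀ ↦ ?_
    by_contra hne
    obtain ⟨F, _, _, h, hh⟩ := hrf g₀ hne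
    exact hh (f.ker_le_ker_of_finite_of_covering hs hf h hg₀)
  exact hcyc (isCyclic_of_injective f hinj)
end

section
/- The group ⊕_p ℤ/pℤ (direct sum over all primes p) is a residually finite group with infinite NCC which has no maximal cyclic subgroups. -/
open DirectSum

/-! `⊕_p ℤ/pℤ` is residually finite through its coordinate projections. An element `g` only
involves the finitely many primes of its support, so for a prime `q` outside it the unit vector
`e_q` lies in no `⟨g⟩`: no finitely many cyclic subgroups cover the group, and since conjugation
is trivial this makes NCC infinite. Moreover the order of `g` divides the product of the primes
of its support and is therefore prime to `q = ord(e_q)`, so `⟨g⟩ < ⟨g + e_q⟩`, and no cyclic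
subgroup is maximal. -/

theorem mem_zmultiples_add_of_coprime {G : Type*} [AddCommGroup G] {a b : G}
    (h : (addOrderOf a).Coprime (addOrderOf b)) : a ∈ AddSubgroup.zmultiples (a + b) := by
  obtain ⟨u, v, huv⟩ := Nat.isCoprime_iff_coprime.2 h
  refine ⟨v * addOrderOf b, ?_⟩
  have ha : (addOrderOf a : ℤ) • a = 0 := by rw [natCast_zsmul, addOrderOf_nsmul_eq_zero]
  have hb : (addOrderOf b : ℤ) • b = 0 := by rw [natCast_zsmul, addOrderOf_nsmul_eq_zero]
  calc (v * addOrderOf b) • (a + b)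
      = (1 - u * addOrderOf a) • a + v • (addOrderOf b : ℤ) • b := by
        rw [smul_add, ← huv, add_sub_cancel_left, ← mul_smul]
    _ = a := by rw [sub_smul, one_smul, mul_smul, ha, hb, smul_zero, smul_zero, sub_zero, add_zero]

theorem NCC_eq_top_of_forall_exists_notMem_zpowers {G : Type*} [CommGroup G]
    (h : ∀ s : Finset G, ∃ x : G, ∀ g ∈ s, x ∉ Subgroup.zpowers g) : NCC G = ⊤ := by
  rw [NCC, CC, sInf_eq_top]
  rintro n ⟨s, -, hcover⟩
  obtain ⟨x, hx⟩ := h s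
  obtain ⟨g, hgs, φ, hxg⟩ := hcover x
  rw [ConjAct.smul_def, mul_inv_cancel_comm] at hxg
  exact absurd hxg (hx g hgs)

theorem Multiplicative.mem_zpowers_iff {A : Type*} [AddGroup A] {g h : Multiplicative A} :
    g ∈ Subgroup.zpowers h ↔ g.toAdd ∈ AddSubgroup.zmultiples h.toAdd :=
  Iff.rfl

namespace DirectSum

theorem exists_monoidHom_finite_ne_one {ι : Type*} {β : ι → Type} [∀ i, AddCommGroup (β i)]
    [∀ i, Finite (β i)] (g : Multiplicative (⨁ i, β i)) (hg : g ≠ 1) :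
    ∃ (F : Type) (_ : Group F) (_ : Finite F) (f : Multiplicative (⨁ i, β i) →* F), f g ≠ 1 := by
  obtain ⟨i, hi⟩ := DFunLike.ne_iff.1 (show g.toAdd ≠ 0 from hg)
  exact ⟨Multiplicative (β i), inferInstance, inferInstance,
    (DFinsupp.evalAddMonoidHom i).toMultiplicative, hi⟩

section

variable {ι : Type*} {β : ι → Type*} [∀ i, AddCommGroup (β i)]

theorem apply_eq_zero_of_mem_zmultiples {x y : ⨁ i, β i} (hx : x ∈ AddSubgroup.zmultiples y)
    {i : ι} (hy : y i = 0) : x i = 0 := by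
  obtain ⟨n, rfl⟩ := hx
  rw [DFinsupp.zsmul_apply, hy, smul_zero]

theorem exists_forall_notMem_zmultiples [Infinite ι] [∀ i, Nontrivial (β i)]
    (s : Finset (⨁ i, β i)) : ∃ x : ⨁ i, β i, ∀ y ∈ s, x ∉ AddSubgroup.zmultiples y := by
  classical
  obtain ⟨i, hi⟩ := Infinite.exists_notMem_finset (s.biUnion DFinsupp.support)
  obtain ⟨b, hb⟩ := exists_ne (0 : β i)
  refine ⟨of β i b, fun y hy hmem => hb ?_⟩
  have hyi : y i = 0 :=
    DFinsupp.notMem_support_iff.1 fun h => hi (Finset.mem_biUnion.2 ⟨y, hy, h⟩)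
  simpa using apply_eq_zero_of_mem_zmultiples hmem hyi

end

local instance (p : Nat.Primes) : Fact (p : ℕ).Prime := ⟨p.2⟩

theorem addOrderOf_dvd_prod_support (g : ⨁ p : Nat.Primes, ZMod (p : ℕ)) :
    addOrderOf g ∣ ∏ p ∈ g.support, (p : ℕ) := by
  refine addOrderOf_dvd_of_nsmul_eq_zero (DFinsupp.ext fun p => ?_)
  rw [DFinsupp.nsmul_apply, DFinsupp.zero_apply]
  by_cases hp : p ∈ g.support
  · rw [nsmul_eq_mul, (ZMod.natCast_eq_zero_iff _ _).2 (Finset.dvd_prod_of_mem _ hp), zero_mul]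
  · rw [DFinsupp.notMem_support_iff.1 hp, smul_zero]

theorem addOrderOf_of_one (q : Nat.Primes) :
    addOrderOf (of (fun p : Nat.Primes => ZMod (p : ℕ)) q 1) = q := by
  rw [addOrderOf_injective (of _ q) (of_injective q), ZMod.addOrderOf_one]

theorem exists_mem_zmultiples_notMem (g : ⨁ p : Nat.Primes, ZMod (p : ℕ)) :
    ∃ h, g ∈ AddSubgroup.zmultiples h ∧ h ∉ AddSubgroup.zmultiples g := by
  obtain ⟨q, hq⟩ := Infinite.exists_notMem_finset g.support
  set e := of (fun p : Nat.Primes => ZMod (p : ℕ)) q 1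
  have hcop : (∏ p ∈ g.support, (p : ℕ)).Coprime q :=
    Nat.Coprime.prod_left fun p hp =>
      (Nat.coprime_primes p.2 q.2).2 fun hpq => hq (Subtype.ext hpq ▸ hp)
  refine ⟨g + e, mem_zmultiples_add_of_coprime ?_, fun hmem => ?_⟩
  · rw [addOrderOf_of_one]
    exact hcop.coprime_dvd_left (addOrderOf_dvd_prod_support g)
  · have he : e ∈ AddSubgroup.zmultiples g := by
      simpa using sub_mem hmem (AddSubgroup.mem_zmultiples g)
    have heq : e q = 0 := apply_eq_zero_of_mem_zmultiples he (DFinsupp.notMem_support_iff.1 hq)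
    simp [e] at heq

end DirectSum

/-- The group `⊕_p ℤ/pℤ` (direct sum over all primes, written multiplicatively) is
residually finite, has infinite NCC, and has no maximal cyclic subgroups. -/
theorem stmt_7 :
    (∀ g : Multiplicative (⨁ p : Nat.Primes, ZMod (p : ℕ)), g ≠ 1 →
      ∃ (F : Type) (_ : Group F) (_ : Finite F)
        (f : Multiplicative (⨁ p : Nat.Primes, ZMod (p : ℕ)) →* F), f g ≠ 1) ∧
    NCC (Multiplicative (⨁ p : Nat.Primes, ZMod (p : ℕ))) = ⊤ ∧
    ¬ ∃ g : Multiplicative (⨁ p : Nat.Primes, ZMod (p : ℕ)),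
        ∀ h : Multiplicative (⨁ p : Nat.Primes, ZMod (p : ℕ)),
          Subgroup.zpowers g ≤ Subgroup.zpowers h →
            Subgroup.zpowers h = Subgroup.zpowers g := by
  have (p : Nat.Primes) : Fact (p : ℕ).Prime := ⟨p.2⟩
  refine ⟨DirectSum.exists_monoidHom_finite_ne_one, ?_, ?_⟩
  · refine NCC_eq_top_of_forall_exists_notMem_zpowers fun s => ?_
    obtain ⟨x, hx⟩ :=
      DirectSum.exists_forall_notMem_zmultiples (s.map Multiplicative.toAdd.toEmbedding)
    exact ⟨.ofAdd x, fun g hg hxg =>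
      hx g.toAdd (Finset.mem_map_of_mem _ hg) (Multiplicative.mem_zpowers_iff.1 hxg)⟩
  · rintro ⟨g, hmax⟩
    obtain ⟨h, hgh, hhg⟩ := DirectSum.exists_mem_zmultiples_notMem g.toAdd
    have hmax_h := hmax (.ofAdd h) (Subgroup.zpowers_le.2 (Multiplicative.mem_zpowers_iff.2 hgh))
    exact hhg (Multiplicative.mem_zpowers_iff.1 (hmax_h ▸ Subgroup.mem_zpowers _))
end

section
/- For a nontrivial discrete group G, the number of distinct orders of maximal cyclic subgroups of G (counting only finite orders > 1) is a lower bound for CC(G,Φ) for any group Φ of automorphisms. -/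
/-- For a nontrivial group `G`, the number of integers `k > 1` arising as the (finite) order
of a maximal cyclic subgroup of `G` is a lower bound for `CC(G,Φ)` for any group `Φ`
acting on `G` by automorphisms. -/
theorem stmt_8 {G Φ : Type*} [Group G] [Group Φ] [MulDistribMulAction Φ G] [Nontrivial G] :
    Set.encard {k : ℕ | 1 < k ∧ ∃ g : G,
      (∀ h : G, Subgroup.zpowers g ≤ Subgroup.zpowers h →
        Subgroup.zpowers h = Subgroup.zpowers g) ∧
      Nat.card (Subgroup.zpowers g) = k} ≤ CC G Φ := by
  apply le_sInf
  rintro n ⟨s, rfl, hcov⟩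
  have hsub : {k : ℕ | 1 < k ∧ ∃ g : G,
      (∀ h : G, Subgroup.zpowers g ≤ Subgroup.zpowers h →
        Subgroup.zpowers h = Subgroup.zpowers g) ∧
      Nat.card (Subgroup.zpowers g) = k} ⊆
      (fun g : G => Nat.card (Subgroup.zpowers g)) '' ↑s := by
    rintro k ⟨hk, g, hmax, hcard⟩
    obtain ⟨g', hg's, φ, hgmem⟩ := hcov g
    have hle : Subgroup.zpowers g ≤ Subgroup.zpowers (φ • g') :=
      (Subgroup.zpowers_le).mpr hgmem
    have heq := hmax _ hle
    refine ⟨g', hg's, ?_⟩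
    have horder : orderOf (φ • g') = orderOf g' := by
      have : φ • g' = (MulDistribMulAction.toMulEquiv G φ) g' := rfl
      rw [this, MulEquiv.orderOf_eq]
    calc Nat.card (Subgroup.zpowers g') = orderOf g' := Nat.card_zpowers g'
      _ = orderOf (φ • g') := horder.symm
      _ = Nat.card (Subgroup.zpowers (φ • g')) := (Nat.card_zpowers _).symm
      _ = k := by rw [heq, hcard]
  calc Set.encard _ ≤ Set.encard ((fun g : G => Nat.card (Subgroup.zpowers g)) '' ↑s) :=
        Set.encard_mono hsub
    _ ≤ Set.encard (↑s : Set G) := Set.encard_image_le _ _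
    _ = s.card := Set.encard_coe_eq_coe_finsetCard s
end

section
/- If a group G (discrete or profinite) has finite NCC, then for any finite group F there are only finitely many homomorphisms from G to F. -/
open MulAction in
/-- A finite group is not the union of conjugates of a proper subgroup. -/
lemma aux_conj_cover {H : Type*} [Group H] [Finite H] (K : Subgroup H)
    (hcov : ∀ h : H, ∃ c : H, c * h * c⁻¹ ∈ K) : K = ⊤ := by
  by_contra hK
  have : Nontrivial (H ⧸ K) := by
    rcases subsingleton_or_nontrivial (H ⧸ K) with hs | hs
    · exact absurd (QuotientGroup.subgroup_eq_top_of_subsingleton K hs) hK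
    · exact hs
  classical
  have : Fintype H := Fintype.ofFinite H
  have : Fintype (H ⧸ K) := Fintype.ofFinite _
  have hfix : ∀ a : H, ∃ x : H ⧸ K, a • x = x := by
    intro a
    obtain ⟨c, hc⟩ := hcov a⁻¹
    refine ⟨((c⁻¹ : H) : H ⧸ K), ?_⟩
    have : a • ((c⁻¹ : H) : H ⧸ K) = ((a * c⁻¹ : H) : H ⧸ K) := rfl
    rw [this, eq_comm, QuotientGroup.eq]
    simpa [mul_assoc] using (K.inv_mem hc)
  have hsub : Subsingleton (orbitRel.Quotient H (H ⧸ K)) :=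
    (pretransitive_iff_subsingleton_quotient H (H ⧸ K)).mp inferInstance
  have : Fintype (orbitRel.Quotient H (H ⧸ K)) := Fintype.ofFinite _
  have hcard1 : Fintype.card (orbitRel.Quotient H (H ⧸ K)) = 1 :=
    Fintype.card_eq_one_iff_nonempty_unique.mpr ⟨by
      refine ⟨⟨⟦((1 : H) : H ⧸ K)⟧⟩, fun a => Subsingleton.elim _ _⟩⟩
  have hburn := MulAction.sum_card_fixedBy_eq_card_orbits_mul_card_group H (H ⧸ K)
  rw [hcard1, one_mul] at hburn
  have hlt : ∑ a : H, (1 : ℕ) < ∑ a : H, Fintype.card (fixedBy (H ⧸ K) a) := by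
    refine Finset.sum_lt_sum (fun a _ => ?_) ⟨(1 : H), Finset.mem_univ _, ?_⟩
    · obtain ⟨x, hx⟩ := hfix a
      exact Fintype.card_pos_iff.mpr ⟨⟨x, hx⟩⟩
    · have : Nontrivial (fixedBy (H ⧸ K) (1 : H)) := by
        rw [fixedBy_one_eq_univ]
        exact Set.nontrivial_coe_sort.mpr Set.nontrivial_univ
      exact Fintype.one_lt_card
  simp only [Finset.sum_const, Finset.card_univ, smul_eq_mul, mul_one] at hlt
  omega

/-- If a group `G` has finite NCC, then for any finite group `F` there are only finitely
many homomorphisms from `G` to `F`. -/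
theorem stmt_11 {G : Type*} [Group G] (h : NCC G ≠ ⊤)
    (F : Type*) [Group F] [Finite F] : Finite (G →* F) := by
  -- extract a finite covering set `s`
  have hne : {n : ℕ∞ | ∃ s : Finset G, (s.card : ℕ∞) = n ∧
      ∀ x : G, ∃ g ∈ s, ∃ φ : ConjAct G, x ∈ Subgroup.zpowers (φ • g)}.Nonempty := by
    by_contra hempty
    rw [Set.not_nonempty_iff_eq_empty] at hempty
    exact h (by simp [NCC, CC, hempty])
  obtain ⟨n, s, -, hcov⟩ := hne
  -- the restriction map to `s` is injective
  refine Finite.of_injective (fun f : G →* F => fun g : s => f g) ?_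
  intro f1 f2 hf
  have hfs : ∀ g ∈ s, f1 g = f2 g := fun g hg => congrFun hf ⟨g, hg⟩
  ext x
  -- set up the diagonal argument
  set θ : G →* F × F := f1.prod f2 with hθ
  set H := θ.range with hH
  let K : Subgroup H := MonoidHom.eqLocus ((MonoidHom.fst F F).comp H.subtype)
    ((MonoidHom.snd F F).comp H.subtype)
  have hKtop : K = ⊤ := by
    apply aux_conj_cover
    rintro ⟨-, y, rfl⟩
    obtain ⟨g, hg, φ, hy⟩ := hcov y
    obtain ⟨k, hk⟩ := hy
    set c : G := ConjAct.ofConjAct φ with hc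
    refine ⟨(θ.rangeRestrict c)⁻¹, ?_⟩
    have hyk : y = c * g ^ k * c⁻¹ := by
      simp only [← hk, ConjAct.smul_def, ← hc, conj_zpow]
    have h1 : (θ.rangeRestrict c)⁻¹ * θ.rangeRestrict y * ((θ.rangeRestrict c)⁻¹)⁻¹
        = θ.rangeRestrict (c⁻¹ * y * c) := by
      rw [inv_inv, map_mul, map_mul, map_inv]
    have h2 : c⁻¹ * y * c = g ^ k := by rw [hyk]; group
    show (θ.rangeRestrict c)⁻¹ * θ.rangeRestrict y * ((θ.rangeRestrict c)⁻¹)⁻¹ ∈ K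
    rw [h1, h2]
    show ((θ (g ^ k)).1 = (θ (g ^ k)).2)
    simp [hθ, hfs g hg]
  have hx : θ.rangeRestrict x ∈ K := hKtop ▸ Subgroup.mem_top _
  exact hx
end

section
/- Let p and q be distinct primes, C a cyclic group of order p^n, Q a nontrivial elementary abelian q-group, and G = Q ⋊ C. Suppose the image of C in Aut(Q) has order p^k and C^{p^{k-1}} acts on Q without nonzero fixed points. Then G has no element of order p^{n-k+1}·q. -/
/-!
If `g = (x, c)` had order `p^(n-k+1)·q`, then `c` would have order `p^(n-k+1)`, and
`y := g^(p^(n-k+1))` would be a nontrivial element of `Q` commuting with `g`, i.e. fixed by `φ c`.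
Since the kernel of `φ` has order only `p^(n-k)`, `φ c ≠ 1`; and in the cyclic group `C` of
order `p^n` the element `c` is a `p^(k-1)`-th power. This contradicts fixed-point-freeness.
-/

theorem IsCyclic.exists_pow_eq_of_pow_eq_one {C : Type*} [Group C] [IsCyclic C] [Finite C]
    {d e : ℕ} (hde : Nat.card C = d * e) {c : C} (hc : c ^ e = 1) : ∃ b : C, b ^ d = c := by
  obtain ⟨g, hg⟩ := IsCyclic.exists_generator (α := C)
  obtain ⟨t, rfl⟩ : ∃ t : ℕ, g ^ t = c := mem_powers_iff_mem_zpowers.mpr (hg c)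
  have he : 0 < e := Nat.pos_of_mul_pos_left (hde ▸ Nat.card_pos)
  have hdt : d * e ∣ t * e := by
    rw [← hde, ← orderOf_eq_card_of_forall_mem_zpowers hg]
    exact orderOf_dvd_of_pow_eq_one (by rwa [pow_mul])
  obtain ⟨u, rfl⟩ := Nat.dvd_of_mul_dvd_mul_right he hdt
  exact ⟨g ^ u, by rw [← pow_mul, mul_comm]⟩

theorem MonoidHom.map_ne_one_of_not_dvd {G H : Type*} [Group G] [Group H] (f : G →* H) {c : G}
    (h : ¬ orderOf c * Nat.card f.range ∣ Nat.card G) : f c ≠ 1 := fun hc =>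
  h <| Subgroup.index_ker f ▸ Subgroup.card_mul_index f.ker ▸
    mul_dvd_mul_right (Subgroup.orderOf_dvd_natCard f.ker hc) _

namespace SemidirectProduct

variable {N G : Type*} [Group N] [Group G] {φ : G →* MulAut N}

theorem right_pow (g : N ⋊[φ] G) (m : ℕ) : (g ^ m).right = g.right ^ m :=
  map_pow (rightHom : N ⋊[φ] G →* G) g m

theorem inl_left_eq_self {g : N ⋊[φ] G} (h : g.right = 1) : inl g.left = g := by
  ext <;> simp [h]

theorem orderOf_right_dvd_orderOf (g : N ⋊[φ] G) : orderOf g.right ∣ orderOf g :=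
  orderOf_map_dvd rightHom g

theorem exists_inl_eq_pow_orderOf_right (g : N ⋊[φ] G) : ∃ y : N, inl y = g ^ orderOf g.right :=
  ⟨_, inl_left_eq_self (by rw [right_pow, pow_orderOf_eq_one])⟩

theorem orderOf_dvd_orderOf_right_mul {q : ℕ} (hN : ∀ x : N, x ^ q = 1) (g : N ⋊[φ] G) :
    orderOf g ∣ orderOf g.right * q := by
  obtain ⟨y, hy⟩ := exists_inl_eq_pow_orderOf_right g
  exact orderOf_dvd_of_pow_eq_one (by rw [pow_mul, ← hy, ← map_pow, hN, map_one])

theorem map_right_eq_of_commute_inl {N : Type*} [CommGroup N] {φ : G →* MulAut N}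
    {g : N ⋊[φ] G} {y : N} (h : Commute g (inl y)) : φ g.right y = y := by
  have hl := congrArg left h.eq
  simp only [mul_left, left_inl, right_inl, map_one, MulAut.one_apply] at hl
  exact mul_left_cancel (hl.trans (mul_comm _ _))

end SemidirectProduct

open SemidirectProduct in
theorem stmt_14_general (p q n k : ℕ) (hp : p.Prime) (hq : q.Prime) (hpq : p ≠ q)
    (C Q : Type*) [Group C] [CommGroup Q]
    (hC : IsCyclic C) (hCcard : Nat.card C = p ^ n)
    (hQ : ∀ x : Q, x ^ q = 1)
    (φ : C →* MulAut Q)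
    (hrange : Nat.card φ.range = p ^ k)
    (hfix : ∀ c : C, φ (c ^ p ^ (k - 1)) ≠ 1 →
      ∀ x : Q, x ≠ 1 → φ (c ^ p ^ (k - 1)) x ≠ x) :
    ∀ g : Q ⋊[φ] C, orderOf g ≠ p ^ (n - k + 1) * q := by
  intro g hg
  have : Finite C := Nat.finite_of_card_ne_zero (hCcard ▸ pow_ne_zero _ hp.ne_zero)
  set c := g.right
  have hc_dvd : orderOf c ∣ p ^ n := hCcard ▸ orderOf_dvd_natCard c
  have hc_coprime : (orderOf c).Coprime q :=
    (Nat.Coprime.pow_left n ((Nat.coprime_primes hp hq).mpr hpq)).coprime_dvd_left hc_dvd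
  have hc_order : orderOf c = p ^ (n - k + 1) := Nat.dvd_antisymm
    (hc_coprime.dvd_of_dvd_mul_right (hg ▸ orderOf_right_dvd_orderOf g))
    (Nat.dvd_of_mul_dvd_mul_right hq.pos (hg ▸ orderOf_dvd_orderOf_right_mul hQ g))
  have hkn : n - k + 1 ≤ n := (Nat.pow_dvd_pow_iff_le_right hp.one_lt).mp (hc_order ▸ hc_dvd)
  have hk : k ≤ n := (Nat.pow_dvd_pow_iff_le_right hp.one_lt).mp
    (hrange ▸ hCcard ▸ Subgroup.card_range_dvd φ)
  have hφc : φ c ≠ 1 := φ.map_ne_one_of_not_dvd <| by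
    rw [hc_order, hrange, hCcard, ← pow_add, Nat.pow_dvd_pow_iff_le_right hp.one_lt]
    omega
  obtain ⟨y, hy_def⟩ := exists_inl_eq_pow_orderOf_right g
  have hy : y ≠ 1 := fun hy => by
    have hg_dvd : p ^ (n - k + 1) * q ∣ p ^ (n - k + 1) * 1 := by
      rw [← hg, mul_one, ← hc_order]
      exact orderOf_dvd_of_pow_eq_one (by rw [← hy_def, hy, map_one])
    exact hq.ne_one (Nat.dvd_one.mp (Nat.dvd_of_mul_dvd_mul_left (pow_pos hp.pos _) hg_dvd))
  have hφy : φ c y = y := map_right_eq_of_commute_inl (hy_def ▸ Commute.self_pow g _)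
  obtain ⟨b, hb⟩ := IsCyclic.exists_pow_eq_of_pow_eq_one (d := p ^ (k - 1))
    (hCcard.trans (by rw [← pow_add]; congr 1; omega)) (hc_order ▸ pow_orderOf_eq_one c)
  exact hfix b (hb ▸ hφc) y hy (hb ▸ hφy)

/-- Let `p ≠ q` be primes, `C` a cyclic group of order `p^n`, `Q` a nontrivial elementary
abelian `q`-group, and `G = Q ⋊ C` (via `φ : C →* Aut Q`). If the image of `C` in `Aut Q`
has order `p^k` and `C^{p^{k-1}}` acts on `Q` without nontrivial fixed points, then `G` has
no element of order `p^{n-k+1}·q`. -/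
theorem stmt_14 (p q n k : ℕ) (hp : p.Prime) (hq : q.Prime) (hpq : p ≠ q)
    (C Q : Type*) [Group C] [CommGroup Q] [Nontrivial Q]
    (hC : IsCyclic C) (hCcard : Nat.card C = p ^ n)
    (hQ : ∀ x : Q, x ^ q = 1)
    (φ : C →* MulAut Q)
    (hrange : Nat.card φ.range = p ^ k)
    (hfix : ∀ c : C, φ (c ^ p ^ (k - 1)) ≠ 1 →
      ∀ x : Q, x ≠ 1 → φ (c ^ p ^ (k - 1)) x ≠ x) :
    ∀ g : Q ⋊[φ] C, orderOf g ≠ p ^ (n - k + 1) * q :=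
  stmt_14_general p q n k hp hq hpq C Q hC hCcard hQ φ hrange hfix
end

section
/- Let G be the inverse limit of a surjective inverse system of finite groups {P_i}. Then NCC(G) = sup_i NCC(P_i). In particular, for any profinite group G, NCC(G) is the supremum of NCC(P) over all finite continuous quotients P of G. -/
/-- `NCCtop G`: for a topological group `G`, the smallest number of closed procyclic
subgroups of `G` whose conjugacy classes cover `G` (a procyclic subgroup is the closure of
`Subgroup.zpowers g`, and its conjugates are the closures of `Subgroup.zpowers (h*g*h⁻¹)`). -/
noncomputable def NCCtop (G : Type*) [Group G] [TopologicalSpace G] : ℕ∞ :=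
  sInf {n : ℕ∞ | ∃ s : Finset G, (s.card : ℕ∞) = n ∧
    ∀ x : G, ∃ g ∈ s, ∃ h : G,
      x ∈ closure ((Subgroup.zpowers (h * g * h⁻¹) : Subgroup G) : Set G)}

/-!
Each `P i` is a continuous quotient of `G`: the projections are surjective because an inverse
limit of nonempty finite sets is nonempty. A covering of `G` by conjugates of procyclic subgroups
therefore maps onto such a covering of every `P i`, which gives `⨆ i, NCC (P i) ≤ NCCtop G`.

Conversely, if every `P i` is covered by the conjugates of `n` cyclic subgroups, the `n`-tuples of
generators doing so form an inverse system of nonempty finite sets, so a compatible family of them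
defines `n` elements of `G`. For `x ∈ G` the compatible choices of a generator index and a
conjugator are again such a system; a compatible choice `(k, h)` puts every coordinate of `x` in the
cyclic subgroup generated by the corresponding coordinate of `h g_k h⁻¹`, hence `x` in its
closure.

A profinite group is the inverse limit of its finite quotients by open normal subgroups.
-/

open Function Set

theorem Finset.exists_subset_range_fin {α : Type*} [Nonempty α] (s : Finset α) {n : ℕ}
    (h : s.card ≤ n) : ∃ v : Fin n → α, (s : Set α) ⊆ Set.range v := by
  refine ⟨extend (Fin.castLE h) (fun k => (s.equivFin.symm k : α))
    fun _ => Classical.arbitrary α,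
    fun g hg => ⟨Fin.castLE h (s.equivFin ⟨g, hg⟩), ?_⟩⟩
  rw [(Fin.castLE_injective h).extend_apply, Equiv.symm_apply_apply]

section Covers

variable {G H : Type*} [Group G] [Group H]

def IsNormalCyclicCover (s : Set G) : Prop :=
  ∀ x : G, ∃ g ∈ s, ∃ h : G, x ∈ Subgroup.zpowers (h * g * h⁻¹)

def IsNormalProcyclicCover [TopologicalSpace G] (s : Set G) : Prop :=
  ∀ x : G, ∃ g ∈ s, ∃ h : G,
    x ∈ closure ((Subgroup.zpowers (h * g * h⁻¹) : Subgroup G) : Set G)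

theorem NCC_eq_sInf : NCC G =
    sInf {n : ℕ∞ | ∃ s : Finset G, (s.card : ℕ∞) = n ∧
      IsNormalCyclicCover (s : Set G)} := by
  simp only [NCC, CC, IsNormalCyclicCover, ConjAct.smul_def, Finset.mem_coe,
    (ConjAct.ofConjAct (G := G)).surjective.exists]

theorem NCCtop_eq_sInf [TopologicalSpace G] : NCCtop G =
    sInf {n : ℕ∞ | ∃ s : Finset G, (s.card : ℕ∞) = n ∧
      IsNormalProcyclicCover (s : Set G)} :=
  rfl

theorem isNormalProcyclicCover_iff [TopologicalSpace G] [DiscreteTopology G] {s : Set G} :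
    IsNormalProcyclicCover s ↔ IsNormalCyclicCover s := by
  simp only [IsNormalProcyclicCover, IsNormalCyclicCover, closure_discrete, SetLike.mem_coe]

theorem NCCtop_eq_NCC [TopologicalSpace G] [DiscreteTopology G] : NCCtop G = NCC G := by
  simp only [NCCtop_eq_sInf, NCC_eq_sInf, isNormalProcyclicCover_iff]

theorem NCCtop_le_card [TopologicalSpace G] {s : Finset G}
    (hs : IsNormalProcyclicCover (s : Set G)) : NCCtop G ≤ s.card :=
  sInf_le ⟨s, rfl, hs⟩

theorem NCCtop_le_of_isNormalProcyclicCover_range [TopologicalSpace G] {n : ℕ} {v : Fin n → G}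
    (hv : IsNormalProcyclicCover (range v)) : NCCtop G ≤ n := by
  classical
  calc NCCtop G ≤ (Finset.univ.image v).card :=
        NCCtop_le_card (by rwa [Finset.coe_image, Finset.coe_univ, image_univ])
    _ ≤ n := by exact_mod_cast Finset.card_image_le.trans_eq (Finset.card_fin n)

theorem exists_isNormalCyclicCover_range_of_NCC_le {n : ℕ} (h : NCC G ≤ n) :
    ∃ v : Fin n → G, IsNormalCyclicCover (range v) := by
  rw [NCC_eq_sInf] at h
  obtain ⟨_, hne, -⟩ := sInf_lt_iff.mp (h.trans_lt (ENat.natCast_lt_top n))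
  obtain ⟨s, hcard, hs⟩ := csInf_mem ⟨_, hne⟩
  obtain ⟨v, hsv⟩ := s.exists_subset_range_fin (n := n) (by exact_mod_cast hcard.trans_le h)
  exact ⟨v, fun x => let ⟨g, hg, hx⟩ := hs x; ⟨g, hsv hg, hx⟩⟩

theorem IsNormalCyclicCover.image {φ : G →* H} (hφ : Surjective φ) {s : Set G}
    (hs : IsNormalCyclicCover s) : IsNormalCyclicCover (φ '' s) := by
  intro x
  obtain ⟨y, rfl⟩ := hφ x
  obtain ⟨g, hg, h, hy⟩ := hs y
  refine ⟨φ g, mem_image_of_mem φ hg, φ h, ?_⟩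
  simpa only [MonoidHom.map_zpowers, map_mul, map_inv] using Subgroup.mem_map_of_mem φ hy

theorem IsNormalProcyclicCover.image [TopologicalSpace G] [TopologicalSpace H] {φ : G →* H}
    (hcont : Continuous φ) (hφ : Surjective φ) {s : Set G} (hs : IsNormalProcyclicCover s) :
    IsNormalProcyclicCover (φ '' s) := by
  intro x
  obtain ⟨y, rfl⟩ := hφ x
  obtain ⟨g, hg, h, hy⟩ := hs y
  refine ⟨φ g, mem_image_of_mem φ hg, φ h, ?_⟩
  simpa only [← Subgroup.coe_map, MonoidHom.map_zpowers, map_mul, map_inv] using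
    mem_closure_image hcont.continuousAt hy

theorem NCCtop_le_of_surjective [TopologicalSpace G] [TopologicalSpace H] (φ : G →* H)
    (hcont : Continuous φ) (hφ : Surjective φ) : NCCtop H ≤ NCCtop G := by
  classical
  rw [NCCtop_eq_sInf (G := G)]
  refine le_sInf ?_
  rintro _ ⟨s, rfl, hs⟩
  calc NCCtop H ≤ (s.image φ).card :=
        NCCtop_le_card (by rw [Finset.coe_image]; exact hs.image hcont hφ)
    _ ≤ s.card := by exact_mod_cast Finset.card_image_le

theorem NCCtop_congr [TopologicalSpace G] [TopologicalSpace H] (e : G ≃ₜ* H) :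
    NCCtop G = NCCtop H :=
  le_antisymm (NCCtop_le_of_surjective e.symm.toMulEquiv.toMonoidHom e.symm.continuous
      e.symm.surjective)
    (NCCtop_le_of_surjective e.toMulEquiv.toMonoidHom e.continuous e.surjective)

end Covers

open CategoryTheory in
theorem exists_compatible_mem_of_finite {J : Type*} [Preorder J] [IsDirected J (· ≤ ·)]
    {X : J → Type*} [∀ i, Finite (X i)] (g : ∀ ⦃i j : J⦄, i ≤ j → X j → X i)
    (hg_id : ∀ i x, g (le_refl i) x = x)
    (hg_comp : ∀ ⦃i j k : J⦄ (hij : i ≤ j) (hjk : j ≤ k) x,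
      g hij (g hjk x) = g (hij.trans hjk) x)
    (S : ∀ i, Set (X i)) (hS : ∀ i, (S i).Nonempty)
    (hgS : ∀ ⦃i j : J⦄ (hij : i ≤ j), MapsTo (g hij) (S j) (S i)) :
    ∃ x : ∀ i, X i, (∀ i, x i ∈ S i) ∧
      ∀ ⦃i j : J⦄ (hij : i ≤ j), g hij (x j) = x i := by
  let F : Jᵒᵖ ⥤ Type _ :=
    { obj := fun i => S i.unop
      map := fun φ => TypeCat.ofHom (MapsTo.restrict _ _ _ (hgS (leOfHom φ.unop)))
      map_id := fun i => by ext x; exact hg_id i.unop x.1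
      map_comp := fun φ ψ => by ext x; exact (hg_comp _ _ x.1).symm }
  have : ∀ i, Nonempty (F.obj i) := fun i => (hS i.unop).to_subtype
  obtain ⟨x, hx⟩ := nonempty_sections_of_finite_inverse_system F
  exact ⟨fun i => x (.op i), fun i => (x (.op i)).2,
    fun i j hij => congrArg Subtype.val (hx (homOfLE hij).op)⟩

section InverseLimit

variable {J : Type*} [Preorder J] {P : J → Type*} [∀ i, Group (P i)]
  (f : ∀ {i j : J}, i ≤ j → (P j →* P i))

def inverseLimit : Subgroup (∀ i, P i) where
  carrier := {x | ∀ (i j : J) (hij : i ≤ j), f hij (x j) = x i}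
  one_mem' _ _ _ := map_one _
  mul_mem' hx hy i j hij := by simp only [Pi.mul_apply, map_mul, hx i j hij, hy i j hij]
  inv_mem' hx i j hij := by simp only [Pi.inv_apply, map_inv, hx i j hij]

structure IsSurjectiveInverseSystem : Prop where
  comp : ∀ {i j k : J} (hij : i ≤ j) (hjk : j ≤ k), (f hij).comp (f hjk) = f (hij.trans hjk)
  surjective : ∀ {i j : J} (hij : i ≤ j), Surjective (f hij)

variable {f}

theorem mem_closure_zpowers_of_forall_mem [IsDirected J (· ≤ ·)] [Nonempty J]
    [∀ i, TopologicalSpace (P i)] {x c : inverseLimit f}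
    (hxc : ∀ i, x.1 i ∈ Subgroup.zpowers (c.1 i)) :
    x ∈ closure ((Subgroup.zpowers c : Subgroup (inverseLimit f)) : Set (inverseLimit f)) := by
  rw [mem_closure_iff]
  rintro _ ⟨u, hu, rfl⟩ hxu
  obtain ⟨I, u', hu', hIu⟩ := isOpen_pi_iff.mp hu x.1 hxu
  obtain ⟨j, hj⟩ := I.exists_le
  obtain ⟨m, hm⟩ := Subgroup.mem_zpowers_iff.mp (hxc j)
  -- `c ^ m` agrees with `x` at level `j`, hence at every level below `j`.
  have hagree : ∀ i ∈ I, (c ^ m).1 i = x.1 i := fun i hi => by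
    rw [← (c ^ m).2 i j (hj i hi), ← x.2 i j (hj i hi), ← hm]
    rfl
  exact ⟨c ^ m, hIu fun i hi => hagree i hi ▸ (hu' i hi).2,
    zpow_mem (Subgroup.mem_zpowers c) m⟩

namespace IsSurjectiveInverseSystem

theorem map_map (hf : IsSurjectiveInverseSystem f) {i j k : J} (hij : i ≤ j) (hjk : j ≤ k)
    (x : P k) :
    f hij (f hjk x) = f (hij.trans hjk) x :=
  DFunLike.congr_fun (hf.comp hij hjk) x

-- a surjective idempotent is the identity
theorem map_refl (hf : IsSurjectiveInverseSystem f) (i : J) :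
    f (le_refl i) = MonoidHom.id (P i) := by
  ext x
  obtain ⟨y, rfl⟩ := hf.surjective le_rfl x
  exact hf.map_map le_rfl le_rfl y

variable [IsDirected J (· ≤ ·)]

theorem surjective_eval [∀ i, Finite (P i)] (hf : IsSurjectiveInverseSystem f) (i : J) :
    Surjective ((Pi.evalMonoidHom P i).comp (inverseLimit f).subtype) := by
  intro a
  obtain ⟨x, hxa, hx⟩ := exists_compatible_mem_of_finite (fun _ _ hij => f hij)
    (fun i x => by rw [hf.map_refl]; rfl) (fun _ _ _ => hf.map_map)
    (fun j => {y | ∀ hij : i ≤ j, f hij y = a})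
    (fun j => by
      obtain ⟨k, hik, hjk⟩ := directed_of (· ≤ ·) i j
      obtain ⟨z, rfl⟩ := hf.surjective hik a
      exact ⟨f hjk z, fun hij => hf.map_map _ _ _⟩)
    (fun j k hjk y hy hij => by rw [hf.map_map, hy])
  refine ⟨⟨x, fun i j hij => hx hij⟩, ?_⟩
  simpa [hf.map_refl] using hxa i le_rfl

theorem iSup_NCC_le_NCCtop [∀ i, Finite (P i)] [∀ i, TopologicalSpace (P i)]
    [∀ i, DiscreteTopology (P i)] (hf : IsSurjectiveInverseSystem f) :
    ⨆ i, NCC (P i) ≤ NCCtop (inverseLimit f) :=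
  iSup_le fun i => NCCtop_eq_NCC (G := P i) ▸ NCCtop_le_of_surjective _
    ((continuous_apply i).comp continuous_subtype_val) (hf.surjective_eval i)

theorem exists_compatible_covers [∀ i, Finite (P i)] (hf : IsSurjectiveInverseSystem f)
    {n : ℕ} (hn : ∀ i, NCC (P i) ≤ n) :
    ∃ v : ∀ i, Fin n → P i, (∀ i, IsNormalCyclicCover (range (v i))) ∧
      ∀ k, (fun i => v i k) ∈ inverseLimit f := by
  obtain ⟨v, hv, hv_comp⟩ := exists_compatible_mem_of_finite (fun _ _ hij v => f hij ∘ v)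
    (fun i v => by rw [hf.map_refl]; rfl) (fun _ _ _ hij hjk v => by rw [← hf.comp hij hjk]; rfl)
    (fun i => {v | IsNormalCyclicCover (range v)})
    (fun i => exists_isNormalCyclicCover_range_of_NCC_le (hn i))
    (fun i j hij v hv => by
      simpa only [mem_ofPred_eq, range_comp] using hv.image (hf.surjective hij))
  exact ⟨v, hv, fun k i j hij => congrFun (hv_comp hij) k⟩

theorem exists_compatible_conjugate [Nonempty J] [∀ i, Finite (P i)]
    (hf : IsSurjectiveInverseSystem f) {n : ℕ} {v : ∀ i, Fin n → P i}
    (hv : ∀ i, IsNormalCyclicCover (range (v i)))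
    (hv_mem : ∀ k, (fun i => v i k) ∈ inverseLimit f)
    (x : inverseLimit f) :
    ∃ (k : Fin n) (h : inverseLimit f),
      ∀ i, x.1 i ∈ Subgroup.zpowers (h.1 i * v i k * (h.1 i)⁻¹) := by
  obtain ⟨w, hw, hw_comp⟩ := exists_compatible_mem_of_finite
    (fun _ _ hij p => (p.1, f hij p.2)) (fun i p => by rw [hf.map_refl]; rfl)
    (fun _ _ _ hij hjk p => by rw [hf.map_map])
    (fun i => {p : Fin n × P i | x.1 i ∈ Subgroup.zpowers (p.2 * v i p.1 * p.2⁻¹)})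
    (fun i => by
      obtain ⟨_, ⟨k, rfl⟩, h, hx⟩ := hv i (x.1 i)
      exact ⟨(k, h), hx⟩)
    (fun i j hij p hp => by
      rw [mem_ofPred_eq] at hp ⊢
      simpa only [MonoidHom.map_zpowers, map_mul, map_inv, x.2 i j hij, hv_mem p.1 i j hij]
        using Subgroup.mem_map_of_mem (f hij) hp)
  -- the `Fin n`-component of a compatible family is constant since `J` is directed
  obtain ⟨i₀⟩ := ‹Nonempty J›
  have hk : ∀ i, (w i).1 = (w i₀).1 := fun i => by
    obtain ⟨j, hij, hi₀j⟩ := directed_of (· ≤ ·) i i₀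
    rw [← hw_comp hij, ← hw_comp hi₀j]
  refine ⟨(w i₀).1, ⟨fun i => (w i).2, fun i j hij => congrArg Prod.snd (hw_comp hij)⟩,
    fun i => ?_⟩
  simpa only [hk i] using mem_ofPred.mp (hw i)

theorem NCCtop_le_iSup_NCC [Nonempty J] [∀ i, Finite (P i)] [∀ i, TopologicalSpace (P i)]
    (hf : IsSurjectiveInverseSystem f) : NCCtop (inverseLimit f) ≤ ⨆ i, NCC (P i) := by
  rcases eq_or_ne (⨆ i, NCC (P i)) ⊤ with htop | htop
  · exact htop ▸ le_top
  obtain ⟨n, hn⟩ := ENat.ne_top_iff_exists.1 htop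
  obtain ⟨v, hv, hv_mem⟩ :=
    hf.exists_compatible_covers fun i => hn ▸ le_iSup (fun i => NCC (P i)) i
  rw [← hn]
  refine NCCtop_le_of_isNormalProcyclicCover_range (v := fun k => ⟨_, hv_mem k⟩) fun x => ?_
  obtain ⟨k, h, hx⟩ := hf.exists_compatible_conjugate hv hv_mem x
  exact ⟨_, mem_range_self k, h, mem_closure_zpowers_of_forall_mem hx⟩

theorem NCCtop_eq_iSup_NCC [Nonempty J] [∀ i, Finite (P i)] [∀ i, TopologicalSpace (P i)]
    [∀ i, DiscreteTopology (P i)] (hf : IsSurjectiveInverseSystem f) :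
    NCCtop (inverseLimit f) = ⨆ i, NCC (P i) :=
  le_antisymm hf.NCCtop_le_iSup_NCC hf.iSup_NCC_le_NCCtop

end IsSurjectiveInverseSystem

end InverseLimit


section Profinite

variable (H : Type*) [Group H] [TopologicalSpace H]

instance : Nonempty (OpenNormalSubgroup H) :=
  ⟨{ toOpenSubgroup := ⊤, isNormal' := Subgroup.normal_top }⟩

def finiteQuotientMap {N M : (OpenNormalSubgroup H)ᵒᵈ} (hNM : N ≤ M) :
    H ⧸ (OrderDual.ofDual M).toSubgroup →* H ⧸ (OrderDual.ofDual N).toSubgroup :=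
  QuotientGroup.map _ _ (MonoidHom.id H) fun _ hx => hNM hx

def toFiniteQuotientLimit : H →* inverseLimit (finiteQuotientMap H) where
  toFun x := ⟨fun _ => x, fun _ _ _ => rfl⟩
  map_one' := rfl
  map_mul' _ _ := rfl

variable {H}

theorem continuous_toFiniteQuotientLimit : Continuous (toFiniteQuotientLimit H) :=
  (continuous_pi fun _ => continuous_quotient_mk').subtype_mk _

theorem injective_toFiniteQuotientLimit [IsTopologicalGroup H] [CompactSpace H] [T1Space H]
    [TotallyDisconnectedSpace H] : Injective (toFiniteQuotientLimit H) := by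
  refine (injective_iff_map_eq_one _).2 fun x hx => ?_
  by_contra hx1
  obtain ⟨N, hN⟩ := ProfiniteGrp.exist_openNormalSubgroup_sub_open_nhds_of_one
    isOpen_compl_singleton (Ne.symm hx1)
  exact hN ((QuotientGroup.eq_one_iff x).1 (congrFun (congrArg Subtype.val hx) (.toDual N))) rfl

theorem surjective_toFiniteQuotientLimit [IsTopologicalGroup H] [CompactSpace H] :
    Surjective (toFiniteQuotientLimit H) := by
  rintro ⟨y, hy⟩
  let C : (OpenNormalSubgroup H)ᵒᵈ → Set H := fun N => QuotientGroup.mk ⁻¹' {y N}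
  have hC N : IsClosed (C N) :=
    (isClosed_discrete ({y N} : Set (H ⧸ (OrderDual.ofDual N).toSubgroup))).preimage
      continuous_quotient_mk'
  have hdir : Directed (· ⊇ ·) C := fun N M => by
    refine ⟨N ⊔ M, fun z hz => ?_, fun z hz => ?_⟩
    · rw [mem_preimage, ← hy N _ le_sup_left, ← mem_singleton_iff.1 hz]; rfl
    · rw [mem_preimage, ← hy M _ le_sup_right, ← mem_singleton_iff.1 hz]; rfl
  obtain ⟨z, hz⟩ := IsCompact.nonempty_iInter_of_directed_nonempty_isCompact_isClosed C hdir
    (fun N => (QuotientGroup.mk_surjective (y N)).imp fun _ => id)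
    (fun N => (hC N).isCompact) hC
  exact ⟨z, Subtype.ext (funext fun N => mem_iInter.1 hz N)⟩

variable (H) in
noncomputable def finiteQuotientLimitEquiv [IsTopologicalGroup H] [CompactSpace H] [T2Space H]
    [TotallyDisconnectedSpace H] : H ≃ₜ* inverseLimit (finiteQuotientMap H) :=
  { continuous_toFiniteQuotientLimit.homeoOfEquivCompactToT2 (f := .ofBijective _
      ⟨injective_toFiniteQuotientLimit, surjective_toFiniteQuotientLimit⟩) with
    map_mul' := map_mul _ }

theorem iSup_NCC_finiteQuotient_eq [IsTopologicalGroup H] :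
    ⨆ N : (OpenNormalSubgroup H)ᵒᵈ, NCC (H ⧸ (OrderDual.ofDual N).toSubgroup) =
      ⨆ (N : Subgroup H) (_ : IsOpen (N : Set H)) (hN : N.Normal),
        @NCC (H ⧸ N) (@QuotientGroup.Quotient.group H _ N hN) :=
  le_antisymm
    (iSup_le fun N => le_iSup_of_le (OrderDual.ofDual N).toSubgroup <|
      le_iSup_of_le (OrderDual.ofDual N).isOpen' <|
        le_iSup_of_le (OrderDual.ofDual N).isNormal' le_rfl)
    (iSup_le fun N => iSup_le fun hN_open => iSup_le fun hN =>
      le_iSup_of_le (OrderDual.toDual ⟨⟨N, hN_open⟩, hN⟩) le_rfl)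

theorem NCCtop_eq_iSup_NCC_quotient [IsTopologicalGroup H] [CompactSpace H] [T2Space H]
    [TotallyDisconnectedSpace H] :
    NCCtop H = ⨆ (N : Subgroup H) (_ : IsOpen (N : Set H)) (hN : N.Normal),
      @NCC (H ⧸ N) (@QuotientGroup.Quotient.group H _ N hN) := by
  rw [NCCtop_congr (finiteQuotientLimitEquiv H), ← iSup_NCC_finiteQuotient_eq]
  exact IsSurjectiveInverseSystem.NCCtop_eq_iSup_NCC
    ⟨fun _ _ => QuotientGroup.map_comp_map _ _ _ _ _ _ _ _,
      fun _ => QuotientGroup.map_surjective_of_surjective _ _ _ QuotientGroup.mk_surjective _⟩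

end Profinite

theorem stmt_15_general {J : Type*} [Preorder J] [IsDirected J (· ≤ ·)] [Nonempty J]
    (P : J → Type*) [∀ i, Group (P i)] [∀ i, Finite (P i)]
    [∀ i, TopologicalSpace (P i)] [∀ i, DiscreteTopology (P i)]
    (f : ∀ {i j : J}, i ≤ j → (P j →* P i))
    (hf_comp : ∀ {i j k : J} (hij : i ≤ j) (hjk : j ≤ k),
      (f hij).comp (f hjk) = f (hij.trans hjk))
    (hf_surj : ∀ {i j : J} (hij : i ≤ j), Function.Surjective (f hij))
    (G : Subgroup (∀ i, P i))
    (hG : (G : Set (∀ i, P i)) = {x | ∀ (i j : J) (hij : i ≤ j), f hij (x j) = x i}) :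
    (NCCtop ↥G = ⨆ i, NCC (P i)) ∧
    ∀ (H : Type) (_ : Group H) (_ : TopologicalSpace H) (_ : IsTopologicalGroup H)
      (_ : CompactSpace H) (_ : T2Space H) (_ : TotallyDisconnectedSpace H),
      NCCtop H = ⨆ (N : Subgroup H) (_ : IsOpen (N : Set H)) (hN : N.Normal),
        @NCC (H ⧸ N) (@QuotientGroup.Quotient.group H _ N hN) := by
  obtain rfl : G = inverseLimit f := SetLike.coe_injective hG
  exact ⟨IsSurjectiveInverseSystem.NCCtop_eq_iSup_NCC ⟨hf_comp, hf_surj⟩,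
    fun _ _ _ _ _ _ _ => NCCtop_eq_iSup_NCC_quotient⟩

/-- Let `G` be the inverse limit of a surjective inverse system of finite groups `{P i}`
(realized as the subgroup of compatible tuples in `Π i, P i`, with the product of the
discrete topologies). Then `NCC(G) = ⨆ i, NCC(P i)`. In particular, for any profinite
group `H`, `NCC(H)` is the supremum of `NCC(P)` over all finite continuous quotients `P`
of `H` (i.e. quotients by open normal subgroups). -/
theorem stmt_15 {J : Type*} [Preorder J] [IsDirected J (· ≤ ·)] [Nonempty J]
    (P : J → Type*) [∀ i, Group (P i)] [∀ i, Finite (P i)]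
    [∀ i, TopologicalSpace (P i)] [∀ i, DiscreteTopology (P i)]
    (f : ∀ {i j : J}, i ≤ j → (P j →* P i))
    (hf_id : ∀ i : J, f (le_refl i) = MonoidHom.id (P i))
    (hf_comp : ∀ {i j k : J} (hij : i ≤ j) (hjk : j ≤ k),
      (f hij).comp (f hjk) = f (hij.trans hjk))
    (hf_surj : ∀ {i j : J} (hij : i ≤ j), Function.Surjective (f hij))
    (G : Subgroup (∀ i, P i))
    (hG : (G : Set (∀ i, P i)) = {x | ∀ (i j : J) (hij : i ≤ j), f hij (x j) = x i}) :
    (NCCtop ↥G = ⨆ i, NCC (P i)) ∧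
    ∀ (H : Type) (_ : Group H) (_ : TopologicalSpace H) (_ : IsTopologicalGroup H)
      (_ : CompactSpace H) (_ : T2Space H) (_ : TotallyDisconnectedSpace H),
      NCCtop H = ⨆ (N : Subgroup H) (_ : IsOpen (N : Set H)) (hN : N.Normal),
        @NCC (H ⧸ N) (@QuotientGroup.Quotient.group H _ N hN) :=
  stmt_15_general P f hf_comp hf_surj G hG
end

section
/- Let H be a subgroup of GL(V) for a vector space V over a field, containing all nonzero scalar operators, and let AH ≤ AGL(V) be generated by H together with all translations. Then H is irreducible as a linear group if and only if AH is primitive as a permutation group on V. Moreover the number of orbits of H on V equals the rank of AH (the number of orbits of AH on V × V). -/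
/-!
Every element of `AH` has the form `v ↦ h v + w` with `h ∈ H`, so translations make `AH`
transitive and `H` is the stabiliser of `0`. A block `B` through `0` is mapped into itself
by every element of `AH` sending some point of `B` into `B`, in particular by `H` and by the
translations by elements of `B`. Hence `B` is closed under addition and, as `H` contains the
scalars, under scalar multiplication, so it is an `H`-invariant subspace; conversely every
`H`-invariant subspace is a block. Finally the translation by `-a` sends `(a, b)` to
`(0, b - a)`, and two pairs `(0, v)` lie in the same `AH`-orbit exactly when the `v`s lie
in the same `H`-orbit.
-/

open MulAction Pointwise

theorem MulAction.IsBlock.smul_mem_of_smul_mem {G X : Type*} [Group G] [MulAction G X]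
    {B : Set X} (hB : IsBlock G B) {g : G} {a b : X} (ha : a ∈ B) (hga : g • a ∈ B)
    (hb : b ∈ B) : g • b ∈ B :=
  hB.smul_eq_of_mem ha hga ▸ Set.smul_mem_smul_set hb

theorem Submodule.isTrivialBlock_coe_iff {R M : Type*} [Semiring R] [AddCommMonoid M]
    [Module R M] (W : Submodule R M) : IsTrivialBlock (W : Set M) ↔ W = ⊥ ∨ W = ⊤ := by
  rw [IsTrivialBlock, ← Set.subsingleton_coe, ← Submodule.coe_eq_univ]
  exact W.subsingleton_iff_eq_bot.or Iff.rfl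

namespace Equiv.Perm

variable {V : Type*} [AddCommGroup V]

variable (V) in
def translations : Subgroup (Perm V) :=
  Subgroup.closure {σ : Perm V | ∃ w : V, ∀ v, σ v = v + w}

theorem addRight_mem_translations (w : V) : Equiv.addRight w ∈ translations V :=
  Subgroup.subset_closure ⟨w, fun _ => rfl⟩

variable {H : Subgroup (Perm V)}

theorem addRight_mem_sup_translations (w : V) : Equiv.addRight w ∈ H ⊔ translations V :=
  Subgroup.mem_sup_right (addRight_mem_translations w)

instance : IsPretransitive ↥(H ⊔ translations V) V :=
  ⟨fun a b => ⟨⟨_, addRight_mem_sup_translations (b - a)⟩, add_sub_cancel a b⟩⟩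

theorem add_mem_of_isBlock {B : Set V} (hB : IsBlock ↥(H ⊔ translations V) B) (h0 : 0 ∈ B)
    {x y : V} (hx : x ∈ B) (hy : y ∈ B) : x + y ∈ B :=
  hB.smul_mem_of_smul_mem (g := ⟨_, addRight_mem_sup_translations y⟩) h0
    (show 0 + y ∈ B by rwa [zero_add]) hx

theorem orbitRel_zero_sub_prod (a b : V) :
    orbitRel ↥(H ⊔ translations V) (V × V) (0, b - a) (a, b) :=
  ⟨⟨_, addRight_mem_sup_translations (-a)⟩,
    Prod.ext (add_neg_cancel a) (sub_eq_add_neg b a).symm⟩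

section

variable (hadd : ∀ σ ∈ H, ∀ a b : V, σ (a + b) = σ a + σ b)
include hadd

def toAddMonoidHomOfMem {σ : Perm V} (hσ : σ ∈ H) : V →+ V :=
  AddMonoidHom.mk' σ (hadd σ hσ)

theorem mem_sup_translations_iff {σ : Perm V} :
    σ ∈ H ⊔ translations V ↔ ∃ h ∈ H, ∃ w : V, ∀ v, σ v = h v + w := by
  constructor
  · intro hσ
    rw [← Subgroup.closure_eq H, translations, ← Subgroup.closure_union] at hσ
    induction hσ using Subgroup.closure_induction with
    | mem τ hτ =>
      rcases hτ with hτ | ⟨w, hw⟩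
      · exact ⟨τ, hτ, 0, fun v => (add_zero _).symm⟩
      · exact ⟨1, one_mem H, w, hw⟩
    | one => exact ⟨1, one_mem H, 0, fun v => (add_zero _).symm⟩
    | mul τ₁ τ₂ _ _ ih₁ ih₂ =>
      obtain ⟨h₁, hh₁, w₁, e₁⟩ := ih₁
      obtain ⟨h₂, hh₂, w₂, e₂⟩ := ih₂
      refine ⟨h₁ * h₂, mul_mem hh₁ hh₂, h₁ w₂ + w₁, fun v => ?_⟩
      simp only [Perm.mul_apply, e₁, e₂, hadd h₁ hh₁, add_assoc]
    | inv τ _ ih =>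
      obtain ⟨h, hh, w, e⟩ := ih
      have hneg : h (-h⁻¹ w) = -h (h⁻¹ w) := map_neg (toAddMonoidHomOfMem hadd hh) _
      refine ⟨h⁻¹, inv_mem hh, -h⁻¹ w, fun v => ?_⟩
      rw [Perm.inv_eq_iff_eq, e, hadd h hh, hneg]
      simp only [Perm.coe_inv, Equiv.apply_symm_apply, neg_add_cancel_right]
  · rintro ⟨h, hh, w, hσ⟩
    rw [show σ = Equiv.addRight w * h from Equiv.ext hσ]
    exact mul_mem (Subgroup.mem_sup_right (addRight_mem_translations w))
      (Subgroup.mem_sup_left hh)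

theorem apply_zero_of_mem {σ : Perm V} (hσ : σ ∈ H) : σ 0 = 0 :=
  map_zero (toAddMonoidHomOfMem hadd hσ)

theorem mem_of_mem_sup_translations_of_apply_zero {σ : Perm V} (hσ : σ ∈ H ⊔ translations V)
    (h0 : σ 0 = 0) : σ ∈ H := by
  obtain ⟨h, hh, w, e⟩ := (mem_sup_translations_iff hadd).1 hσ
  have hw : w = 0 := by rw [← h0, e, apply_zero_of_mem hadd hh, zero_add]
  rwa [show σ = h from Equiv.ext fun v => by rw [e, hw, add_zero]]

theorem isBlock_sup_translations (W : AddSubgroup V) (hW : ∀ σ ∈ H, ∀ v ∈ W, σ v ∈ W) :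
    IsBlock ↥(H ⊔ translations V) (W : Set V) := by
  have key : ∀ (g : ↥(H ⊔ translations V)) (a : V), a ∈ W → g • a ∈ W →
      g • (W : Set V) ⊆ W := by
    rintro ⟨σ, hσ⟩ a ha hσa _ ⟨u, hu, rfl⟩
    obtain ⟨h, hh, w, e⟩ := (mem_sup_translations_iff hadd).1 hσ
    have hw : w ∈ W := by
      simpa [e] using W.sub_mem (show σ a ∈ W from hσa) (hW h hh a ha)
    show σ u ∈ W
    rw [e]
    exact W.add_mem (hW h hh u hu) hw
  rw [isBlock_iff_smul_eq_of_mem]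
  intro g a ha hga
  refine (key g a ha hga).antisymm ?_
  rw [Set.subset_smul_set_iff]
  exact key g⁻¹ (g • a) hga (by rwa [inv_smul_smul])

theorem apply_mem_of_isBlock {B : Set V} (hB : IsBlock ↥(H ⊔ translations V) B) (h0 : 0 ∈ B)
    {σ : Perm V} (hσ : σ ∈ H) {x : V} (hx : x ∈ B) : σ x ∈ B :=
  hB.smul_mem_of_smul_mem (g := ⟨σ, Subgroup.mem_sup_left hσ⟩) h0
    (show σ 0 ∈ B by rwa [apply_zero_of_mem hadd hσ]) hx

theorem isPreprimitive_sup_translations {F : Type*} [Field F] [Module F V]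
    (hscalar : ∀ c : F, c ≠ 0 → ∀ σ : Perm V, (∀ v, σ v = c • v) → σ ∈ H)
    (hirr : ∀ W : Submodule F V, (∀ σ ∈ H, ∀ v ∈ W, σ v ∈ W) → W = ⊥ ∨ W = ⊤) :
    IsPreprimitive ↥(H ⊔ translations V) V := by
  refine IsPreprimitive.of_isTrivialBlock_base (0 : V) fun {B} h0 hB => ?_
  let W : Submodule F V :=
    { carrier := B
      add_mem' := fun hx hy => add_mem_of_isBlock hB h0 hx hy
      zero_mem' := h0
      smul_mem' := fun c x hx => by
        rcases eq_or_ne c 0 with rfl | hc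
        · rwa [zero_smul]
        · exact apply_mem_of_isBlock hadd hB h0
            (hscalar c hc (LinearEquiv.smulOfNeZero F V c hc).toEquiv fun _ => rfl) hx }
  exact W.isTrivialBlock_coe_iff.2
    (hirr W fun σ hσ v hv => apply_mem_of_isBlock hadd hB h0 hσ hv)

theorem orbitRel_zero_prod_iff {v₁ v₂ : V} :
    orbitRel ↥(H ⊔ translations V) (V × V) (0, v₁) (0, v₂) ↔ orbitRel ↥H V v₁ v₂ := by
  simp only [orbitRel_apply, mem_orbit_iff]
  constructor
  · rintro ⟨⟨σ, hσ⟩, hσv⟩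
    have h0 : σ 0 = 0 := congrArg Prod.fst hσv
    exact ⟨⟨σ, mem_of_mem_sup_translations_of_apply_zero hadd hσ h0⟩, congrArg Prod.snd hσv⟩
  · rintro ⟨⟨σ, hσ⟩, hσv⟩
    exact ⟨⟨σ, Subgroup.mem_sup_left hσ⟩, Prod.ext (apply_zero_of_mem hadd hσ) hσv⟩

noncomputable def orbitRelQuotientEquivProd :
    orbitRel.Quotient ↥H V ≃ orbitRel.Quotient ↥(H ⊔ translations V) (V × V) :=
  Equiv.ofBijective
    (Quotient.map (fun v => ((0 : V), v)) fun _ _ => (orbitRel_zero_prod_iff hadd).2)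
    ⟨fun q₁ q₂ => Quotient.inductionOn₂ q₁ q₂ fun _ _ h =>
        Quotient.sound ((orbitRel_zero_prod_iff hadd).1 (Quotient.exact h)),
      fun q => Quotient.inductionOn q fun ⟨a, b⟩ =>
        ⟨⟦b - a⟧, Quotient.sound (orbitRel_zero_sub_prod a b)⟩⟩

end

end Equiv.Perm

/-- Let `H` be a subgroup of `GL(V)` (realized as a subgroup of the permutations of `V`
consisting of linear maps) containing all nonzero scalar operators, and let `AH` be the
subgroup of the affine group generated by `H` and all translations. Then `H` is irreducible
as a linear group iff `AH` is primitive as a permutation group on `V` (i.e. transitive with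
only trivial blocks); moreover the number of orbits of `H` on `V` equals the rank of `AH`,
the number of orbits of `AH` on `V × V`. -/
theorem stmt_16 {F V : Type*} [Field F] [AddCommGroup V] [Module F V]
    (H : Subgroup (Equiv.Perm V))
    (hlin : ∀ σ ∈ H, ∃ e : V ≃ₗ[F] V, ∀ v, σ v = e v)
    (hscalar : ∀ c : F, c ≠ 0 → ∀ σ : Equiv.Perm V, (∀ v, σ v = c • v) → σ ∈ H) :
    let AH : Subgroup (Equiv.Perm V) :=
      H ⊔ Subgroup.closure {σ : Equiv.Perm V | ∃ w : V, ∀ v, σ v = v + w}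
    ((∀ W : Submodule F V, (∀ σ ∈ H, ∀ v ∈ W, σ v ∈ W) → W = ⊥ ∨ W = ⊤) ↔
      (MulAction.IsPretransitive ↥AH V ∧
        ∀ B : Set V, MulAction.IsBlock ↥AH B → B.Subsingleton ∨ B = Set.univ)) ∧
    Cardinal.mk (MulAction.orbitRel.Quotient ↥H V) =
      Cardinal.mk (MulAction.orbitRel.Quotient ↥AH (V × V)) := by
  intro AH
  have hadd : ∀ σ ∈ H, ∀ a b : V, σ (a + b) = σ a + σ b := fun σ hσ a b => by
    obtain ⟨e, he⟩ := hlin σ hσ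
    simp only [he, map_add]
  refine ⟨⟨fun hirr => ?_, fun ⟨_, hblocks⟩ W hW => ?_⟩,
    Cardinal.mk_congr (Equiv.Perm.orbitRelQuotientEquivProd hadd)⟩
  · have := Equiv.Perm.isPreprimitive_sup_translations hadd hscalar hirr
    exact ⟨this.toIsPretransitive, fun B hB => this.isTrivialBlock_of_isBlock hB⟩
  · exact W.isTrivialBlock_coe_iff.1
      (hblocks _ (Equiv.Perm.isBlock_sup_translations hadd W.toAddSubgroup hW))
end

section
/- Let L be a subfield of a central division algebra D of degree d over a local field F, with L ⊇ F, residue degree a and ramification degree b over F. With respect to a uniformizer π of D (π^d a uniformizer of F), the dimension r_i(L) of the i-th graded piece of L in the filtration by powers of π equals a if d/b divides i and 0 otherwise. -/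
/-!
Multiplying by a power of a uniformizer `t` of `L` shifts the filtration: if `ν t = d/b`
and `i = k (d/b)`, then `y ↦ t⁻ᵏ y` identifies the `i`-th graded piece of `L` with the
`0`-th one, which is the residue field of `L`, of size `Q^a`. If `d/b ∤ i`, no element
of `L` has valuation exactly `i`, so the `i`-th graded piece is zero.

A dimension `r` over the residue field of `F` is encoded by the cardinality `Q^r` of a
transversal of the graded piece (`IsGradedTransversal`).
-/

def IsGradedTransversal {D : Type*} [DivisionRing D] (ν : D → WithTop ℤ) (L : Subfield D)
    (m : ℤ) (s : Finset D) : Prop :=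
  (∀ x ∈ s, x ∈ L ∧ (m : WithTop ℤ) ≤ ν x) ∧
    ∀ y ∈ L, (m : WithTop ℤ) ≤ ν y → ∃! x, x ∈ s ∧ ((m + 1 : ℤ) : WithTop ℤ) ≤ ν (y - x)

section

variable {D : Type*} [DivisionRing D] {ν : D → WithTop ℤ}

theorem valuation_one (hν0 : ∀ x : D, ν x = ⊤ ↔ x = 0)
    (hνmul : ∀ x y : D, ν (x * y) = ν x + ν y) : ν 1 = 0 := by
  have h := hνmul 1 1
  rw [one_mul] at h
  lift ν 1 to ℤ using fun h1 => one_ne_zero ((hν0 1).mp h1) with n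
  norm_cast at h ⊢
  omega

theorem valuation_pow (hν0 : ∀ x : D, ν x = ⊤ ↔ x = 0)
    (hνmul : ∀ x y : D, ν (x * y) = ν x + ν y) {t : D} {e : ℤ} (ht : ν t = e) (k : ℕ) :
    ν (t ^ k) = ((k * e : ℤ) : WithTop ℤ) := by
  induction k with
  | zero => simpa using valuation_one hν0 hνmul
  | succ k ih =>
    rw [pow_succ, hνmul, ih, ht, ← WithTop.coe_add]
    congr 1
    push_cast
    ring

theorem IsGradedTransversal.image_mul_left [DecidableEq D]
    (hνmul : ∀ x y : D, ν (x * y) = ν x + ν y)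
    {L : Subfield D} {m c : ℤ} {s : Finset D} (hs : IsGradedTransversal ν L m s)
    {u : D} (huL : u ∈ L) (hu0 : u ≠ 0) (hu : ν u = c) :
    IsGradedTransversal ν L (c + m) (s.image (u * ·)) := by
  have shift (n : ℤ) (z : D) : ((c + n : ℤ) : WithTop ℤ) ≤ ν (u * z) ↔ (n : WithTop ℤ) ≤ ν z := by
    rw [hνmul, hu, WithTop.coe_add]
    exact WithTop.add_le_add_iff_left WithTop.coe_ne_top
  obtain ⟨hsmem, hsrep⟩ := hs
  refine ⟨?_, fun y hyL hy => ?_⟩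
  · simp only [Finset.mem_image]
    rintro _ ⟨x, hx, rfl⟩
    exact ⟨L.mul_mem huL (hsmem x hx).1, (shift m x).2 (hsmem x hx).2⟩
  · have hy_eq : y = u * (u⁻¹ * y) := by rw [← mul_assoc, mul_inv_cancel₀ hu0, one_mul]
    have hdiff : ∀ x, ν (y - u * x) = ν (u * (u⁻¹ * y - x)) := fun x => by
      rw [mul_sub, ← hy_eq]
    rw [hy_eq, shift] at hy
    obtain ⟨x, ⟨hxs, hx⟩, hxuniq⟩ :=
      hsrep (u⁻¹ * y) (L.mul_mem (L.inv_mem huL) hyL) hy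
    refine ⟨u * x, ⟨Finset.mem_image_of_mem _ hxs, ?_⟩, ?_⟩
    · rwa [hdiff, add_assoc, shift]
    · rintro _ ⟨hmem, hx'⟩
      obtain ⟨x', hx's, rfl⟩ := Finset.mem_image.mp hmem
      rw [hdiff, add_assoc, shift] at hx'
      rw [hxuniq x' ⟨hx's, hx'⟩]

theorem isGradedTransversal_zero (hν0 : ∀ x : D, ν x = ⊤ ↔ x = 0) {L : Subfield D} {m : ℤ}
    (hm : ∀ y ∈ L, y ≠ 0 → ν y ≠ m) : IsGradedTransversal ν L m {0} := by
  have hν0' : ν 0 = ⊤ := (hν0 0).2 rfl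
  refine ⟨by simp [hν0'], fun y hyL hy =>
    ⟨0, ⟨Finset.mem_singleton_self 0, ?_⟩, fun x hx => Finset.mem_singleton.1 hx.1⟩⟩
  rw [sub_zero]
  rcases eq_or_ne y 0 with rfl | hy0
  · simp [hν0']
  · have hym := hm y hyL hy0
    lift ν y to ℤ using fun h => hy0 ((hν0 y).1 h) with n
    norm_cast at hy hym ⊢
    omega

end

theorem stmt_17_general (D : Type*) [DivisionRing D] (ν : D → WithTop ℤ)
    (hν0 : ∀ x : D, ν x = ⊤ ↔ x = 0)
    (hνmul : ∀ x y : D, ν (x * y) = ν x + ν y)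
    (L : Subfield D)
    (d a b : ℕ)
    -- `L` has ramification degree `b` over `F`, i.e. `ν(L^×) = (d/b)ℤ`:
    (hLunif : ∃ t ∈ L, ν t = ((d / b : ℕ) : ℤ))
    (hLval : ∀ x ∈ L, x ≠ 0 → ∃ z : ℤ, ν x = ((d / b : ℕ) : ℤ) * z)
    (Q : ℕ)
    -- `L` has residue degree `a` over `F`, i.e. its residue field has `Q^a` elements:
    (hresL : ∃ s : Finset D, s.card = Q ^ a ∧ (∀ x ∈ s, x ∈ L ∧ (0 : WithTop ℤ) ≤ ν x) ∧
      ∀ y ∈ L, (0 : WithTop ℤ) ≤ ν y → ∃! x, x ∈ s ∧ (1 : WithTop ℤ) ≤ ν (y - x))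
    (i : ℕ) :
    ∃ s : Finset D, s.card = (if (d / b) ∣ i then Q ^ a else 1) ∧
      (∀ x ∈ s, x ∈ L ∧ ((i : ℤ) : WithTop ℤ) ≤ ν x) ∧
      ∀ y ∈ L, ((i : ℤ) : WithTop ℤ) ≤ ν y →
        ∃! x, x ∈ s ∧ (((i : ℤ) + 1 : ℤ) : WithTop ℤ) ≤ ν (y - x) := by
  classical
  by_cases hdvd : d / b ∣ i
  · obtain ⟨t, htL, ht⟩ := hLunif
    obtain ⟨k, rfl⟩ := hdvd
    obtain ⟨s, hscard, hs⟩ := hresL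
    have ht0 : t ≠ 0 := fun h => by simp [h, (hν0 0).2 rfl] at ht
    have htk := valuation_pow hν0 hνmul ht k
    have hst := IsGradedTransversal.image_mul_left hνmul (m := 0) hs (L.pow_mem htL k)
      (pow_ne_zero k ht0) htk
    have hi : ((d / b * k : ℕ) : ℤ) = (k : ℤ) * ((d / b : ℕ) : ℤ) + 0 := by push_cast; ring
    refine ⟨_, ?_, by rw [hi]; exact hst⟩
    rw [Finset.card_image_of_injective _ (mul_right_injective₀ (pow_ne_zero k ht0)), hscard,
      if_pos (dvd_mul_right _ _)]
  · refine ⟨{0}, by simp [hdvd], isGradedTransversal_zero hν0 fun y hyL hy0 hyi => hdvd ?_⟩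
    obtain ⟨z, hz⟩ := hLval y hyL hy0
    rw [hz] at hyi
    exact_mod_cast Dvd.intro z (WithTop.coe_injective hyi)

/-- Let `D` be a central division algebra of degree `d` over a local field `F`, equipped
with its discrete valuation `ν` (normalized so that a uniformizer `π` of `D` has `ν π = 1`
and `ν(F^×) = dℤ`).  Let `L` be a subfield of `D` containing `F` with residue degree `a`
and ramification degree `b` over `F` (so the residue field of `F` has some finite
cardinality `Q`, that of `L` has cardinality `Q^a`, and `ν(L^×) = (d/b)ℤ`).  Then the
`i`-th graded piece `ρ_i(L)` of `L` for the filtration by powers of `π` — i.e. the image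
of `(L ∩ π^i O_D)/(L ∩ π^{i+1} O_D)` in `π^i O_D/π^{i+1} O_D` — has dimension `a` over the
residue field of `F` if `(d/b) ∣ i`, and dimension `0` otherwise.  Equivalently (and as
formalized here, via finite transversals): the set of elements of `L` of valuation `≥ i`
meets exactly `Q^a` classes modulo valuation `≥ i+1` if `(d/b) ∣ i`, and exactly `1`
class otherwise. -/
theorem stmt_17 (D : Type*) [DivisionRing D] (ν : D → WithTop ℤ)
    (hν0 : ∀ x : D, ν x = ⊤ ↔ x = 0)
    (hνmul : ∀ x y : D, ν (x * y) = ν x + ν y)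
    (hνadd : ∀ x y : D, min (ν x) (ν y) ≤ ν (x + y))
    (F L : Subfield D) (hFL : F ≤ L)
    (hFcentral : ∀ x ∈ F, ∀ y : D, x * y = y * x)
    (d a b : ℕ) (hd : 0 < d) (ha : 0 < a) (hb : 0 < b) (hbd : b ∣ d)
    (π : D) (hπ : ν π = (1 : ℤ))
    -- `F` has a uniformizer of valuation `d` and `ν(F^×) = dℤ`:
    (hτ : ∃ τ ∈ F, ν τ = (d : ℤ))
    (hFval : ∀ x ∈ F, x ≠ 0 → ∃ z : ℤ, ν x = (d : ℤ) * z)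
    -- `L` has ramification degree `b` over `F`, i.e. `ν(L^×) = (d/b)ℤ`:
    (hLunif : ∃ t ∈ L, ν t = ((d / b : ℕ) : ℤ))
    (hLval : ∀ x ∈ L, x ≠ 0 → ∃ z : ℤ, ν x = ((d / b : ℕ) : ℤ) * z)
    -- the residue field of `F` has `Q` elements:
    (Q : ℕ) (hQ : 1 < Q)
    (hresF : ∃ s : Finset D, s.card = Q ∧ (∀ x ∈ s, x ∈ F ∧ (0 : WithTop ℤ) ≤ ν x) ∧
      ∀ y ∈ F, (0 : WithTop ℤ) ≤ ν y → ∃! x, x ∈ s ∧ (1 : WithTop ℤ) ≤ ν (y - x))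
    -- `L` has residue degree `a` over `F`, i.e. its residue field has `Q^a` elements:
    (hresL : ∃ s : Finset D, s.card = Q ^ a ∧ (∀ x ∈ s, x ∈ L ∧ (0 : WithTop ℤ) ≤ ν x) ∧
      ∀ y ∈ L, (0 : WithTop ℤ) ≤ ν y → ∃! x, x ∈ s ∧ (1 : WithTop ℤ) ≤ ν (y - x))
    (i : ℕ) :
    ∃ s : Finset D, s.card = (if (d / b) ∣ i then Q ^ a else 1) ∧
      (∀ x ∈ s, x ∈ L ∧ ((i : ℤ) : WithTop ℤ) ≤ ν x) ∧
      ∀ y ∈ L, ((i : ℤ) : WithTop ℤ) ≤ ν y →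
        ∃! x, x ∈ s ∧ (((i : ℤ) + 1 : ℤ) : WithTop ℤ) ≤ ν (y - x) :=
  stmt_17_general D ν hν0 hνmul L d a b hLunif hLval Q hresL i
end
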